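/- arXiv:2210.10556 — 10 statements merged into one kernel-verified Lean document; each statement's English description precedes it below -/
import Mathlib

section
/- Let A be a commutative ring, let R = A[z] be the polynomial ring in one variable, and let D ⊆ A[z] be a set that is Diophantine over A[z]. Then for every integer α ≥ 0, the set D_α = {f ∈ D : deg(f) ≤ α}, identified with a subset of A^{α+1} via coefficients, is a countable union of sets that are Diophantine over A. -/
/-- A set `X ⊆ R^n` is *Diophantine* over `R` if there are finitely many polynomials
`F₁, …, F_r ∈ R[x₁,…,x_n,y₁,…,y_m]` such that `X` is the set of `a ∈ R^n` for which the
system `F_j(a, b) = 0` (for all `j`) has a solution `b ∈ R^m`. -/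
def IsDiophantine {R : Type*} [CommRing R] {n : ℕ} (X : Set (Fin n → R)) : Prop :=
  ∃ (m r : ℕ) (F : Fin r → MvPolynomial (Fin n ⊕ Fin m) R),
    ∀ a : Fin n → R, a ∈ X ↔
      ∃ b : Fin m → R, ∀ j : Fin r, MvPolynomial.eval (Sum.elim a b) (F j) = 0

/-- A set `X ⊆ R` is Diophantine over `R` (one-variable case of `IsDiophantine`). -/
def IsDiophantine1 {R : Type*} [CommRing R] (X : Set R) : Prop :=
  ∃ (m r : ℕ) (F : Fin r → MvPolynomial (Fin 1 ⊕ Fin m) R),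
    ∀ a : R, a ∈ X ↔
      ∃ b : Fin m → R, ∀ j : Fin r, MvPolynomial.eval (Sum.elim (fun _ => a) b) (F j) = 0

/-- A set `X ⊆ R²` is Diophantine over `R` (two-variable case of `IsDiophantine`). -/
def IsDiophantine2 {R : Type*} [CommRing R] (X : Set (R × R)) : Prop :=
  ∃ (m r : ℕ) (F : Fin r → MvPolynomial (Fin 2 ⊕ Fin m) R),
    ∀ a : R × R, a ∈ X ↔
      ∃ b : Fin m → R, ∀ j : Fin r, MvPolynomial.eval (Sum.elim ![a.1, a.2] b) (F j) = 0

namespace DioAux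

variable {A : Type*} [CommRing A]

noncomputable def chi (α β m : ℕ) : MvPolynomial (Fin 1 ⊕ Fin m) (Polynomial A) →+*
    Polynomial (MvPolynomial (Fin (α+1) ⊕ Fin (m*(β+1))) A) :=
  MvPolynomial.eval₂Hom (Polynomial.mapRingHom MvPolynomial.C)
    (Sum.elim
      (fun _ => ∑ i : Fin (α+1),
        Polynomial.C (MvPolynomial.X (Sum.inl i)) * Polynomial.X ^ (i:ℕ))
      (fun t => ∑ s : Fin (β+1),
        Polynomial.C (MvPolynomial.X (Sum.inr (finProdFinEquiv (t, s)))) * Polynomial.X ^ (s:ℕ)))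

lemma key (α β m : ℕ) (c : Fin (α+1) → A) (d : Fin (m*(β+1)) → A)
    (f : MvPolynomial (Fin 1 ⊕ Fin m) (Polynomial A)) :
    Polynomial.map (MvPolynomial.eval (Sum.elim c d)) (chi α β m f)
      = MvPolynomial.eval (Sum.elim
          (fun _ => ∑ i : Fin (α+1), Polynomial.C (c i) * Polynomial.X ^ (i:ℕ))
          (fun t => ∑ s : Fin (β+1),
            Polynomial.C (d (finProdFinEquiv (t, s))) * Polynomial.X ^ (s:ℕ))) f := by
  have h : (Polynomial.mapRingHom (MvPolynomial.eval (Sum.elim c d))).comp (chi (A := A) α β m)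
      = MvPolynomial.eval (Sum.elim
          (fun _ => ∑ i : Fin (α+1), Polynomial.C (c i) * Polynomial.X ^ (i:ℕ))
          (fun t => ∑ s : Fin (β+1),
            Polynomial.C (d (finProdFinEquiv (t, s))) * Polynomial.X ^ (s:ℕ))) := by
    apply MvPolynomial.ringHom_ext
    · intro a
      have hid : ((MvPolynomial.eval (Sum.elim c d)).comp
          (MvPolynomial.C : A →+* MvPolynomial (Fin (α+1) ⊕ Fin (m*(β+1))) A)) = RingHom.id A :=
        RingHom.ext fun x => MvPolynomial.eval_C x
      simp [chi, Polynomial.map_map, hid]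
    · rintro (i | t) <;>
        simp [chi, Polynomial.map_sum, Polynomial.map_mul, Polynomial.map_pow,
          Polynomial.map_C, Polynomial.map_X, MvPolynomial.eval_X]
  calc Polynomial.map (MvPolynomial.eval (Sum.elim c d)) (chi α β m f)
      = ((Polynomial.mapRingHom (MvPolynomial.eval (Sum.elim c d))).comp (chi (A := A) α β m)) f := rfl
    _ = _ := by rw [h]

lemma recon {n : ℕ} (p : Polynomial A) (h : p.natDegree < n) :
    ∑ s : Fin n, Polynomial.C (p.coeff s) * Polynomial.X ^ (s:ℕ) = p := by
  conv_rhs => rw [Polynomial.as_sum_range' p n h]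
  rw [Fin.sum_univ_eq_sum_range (fun i => Polynomial.C (p.coeff i) * Polynomial.X ^ i)]
  simp [Polynomial.C_mul_X_pow_eq_monomial]

end DioAux

/-- If `D ⊆ A[z]` is Diophantine over `A[z]`, then for every `α ≥ 0` the
truncation `D_α = {f ∈ D : deg f ≤ α}`, identified with a subset of `A^{α+1}` via
coefficients, is a countable union of sets that are Diophantine over `A`. -/
theorem diophantine_truncation_countable_union_of_diophantine
    {A : Type*} [CommRing A] (D : Set (Polynomial A)) (hD : IsDiophantine1 D) (α : ℕ) :
    ∃ E : ℕ → Set (Fin (α + 1) → A),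
      (∀ β : ℕ, IsDiophantine (E β)) ∧
      {c : Fin (α + 1) → A |
        (∑ i : Fin (α + 1), Polynomial.C (c i) * Polynomial.X ^ (i : ℕ)) ∈ D} = ⋃ β, E β := by
  classical
  obtain ⟨m, r, F, hF⟩ := hD
  refine ⟨fun β => {c | ∃ d : Fin (m*(β+1)) → A,
      ∀ u : Fin (r * ((Finset.univ.sup fun j => (DioAux.chi α β m (F j)).natDegree) + 1)),
        MvPolynomial.eval (Sum.elim c d)
          ((DioAux.chi α β m (F (finProdFinEquiv.symm u).1)).coeff
            ((finProdFinEquiv.symm u).2 : ℕ)) = 0},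
    fun β => ⟨m*(β+1),
      r * ((Finset.univ.sup fun j => (DioAux.chi α β m (F j)).natDegree) + 1),
      fun u => (DioAux.chi α β m (F (finProdFinEquiv.symm u).1)).coeff
        ((finProdFinEquiv.symm u).2 : ℕ),
      fun a => Iff.rfl⟩, ?_⟩
  ext c
  simp only [Set.mem_setOf_eq, Set.mem_iUnion, hF]
  constructor
  · rintro ⟨b, hb⟩
    set β := Finset.univ.sup fun t => (b t).natDegree with hβ
    refine ⟨β, fun u => (b (finProdFinEquiv.symm u).1).coeff ((finProdFinEquiv.symm u).2 : ℕ), ?_⟩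
    intro u
    have hbrec : (fun t : Fin m => ∑ s : Fin (β+1),
        Polynomial.C (((fun u => (b (finProdFinEquiv.symm u).1).coeff
          ((finProdFinEquiv.symm u).2 : ℕ)) : Fin (m*(β+1)) → A) (finProdFinEquiv (t, s))) *
          Polynomial.X ^ (s:ℕ)) = b := by
      funext t
      simp only [Equiv.symm_apply_apply]
      exact DioAux.recon (b t) (Nat.lt_succ_of_le (hβ ▸ Finset.le_sup (f := fun t => (b t).natDegree) (Finset.mem_univ t)))
    rw [← Polynomial.coeff_map, DioAux.key, hbrec, hb, Polynomial.coeff_zero]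
  · rintro ⟨β, d, hd⟩
    refine ⟨fun t => ∑ s : Fin (β+1),
      Polynomial.C (d (finProdFinEquiv (t, s))) * Polynomial.X ^ (s:ℕ), fun j => ?_⟩
    rw [← DioAux.key α β m c d (F j)]
    refine Polynomial.ext fun k => ?_
    rw [Polynomial.coeff_map, Polynomial.coeff_zero]
    by_cases hk : k ≤ Finset.univ.sup fun j => (DioAux.chi (A := A) α β m (F j)).natDegree
    · have h := hd (finProdFinEquiv (j, ⟨k, Nat.lt_succ_of_le hk⟩))
      simpa [Equiv.symm_apply_apply] using h
    · have h1 : (DioAux.chi (A := A) α β m (F j)).natDegree ≤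
          Finset.univ.sup fun j => (DioAux.chi (A := A) α β m (F j)).natDegree :=
        Finset.le_sup (f := fun j => (DioAux.chi (A := A) α β m (F j)).natDegree)
          (Finset.mem_univ j)
      push_neg at hk
      rw [Polynomial.coeff_eq_zero_of_natDegree_lt (lt_of_le_of_lt h1 hk), map_zero]
end

section
/- Let A be a commutative ring and let D ⊆ A[z] be a set that is Diophantine over A[z]. Then for every integer α ≥ 0, the sets Zero(D_α) = {a ∈ A : f(a) = 0 for some f ∈ D with deg(f) ≤ α} and Zero(D) = {a ∈ A : f(a) = 0 for some f ∈ D} are each a countable union of sets that are Diophantine over A. -/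
noncomputable def pc {R : Type*} [CommRing R] {n : ℕ} (c : Fin n → R) : Polynomial R :=
  ∑ i, Polynomial.C (c i) * Polynomial.X ^ (i : ℕ)

lemma pc_natDegree_le {R : Type*} [CommRing R] {n : ℕ} (c : Fin (n+1) → R) :
    (pc c).natDegree ≤ n := by
  refine Polynomial.natDegree_sum_le_of_forall_le Finset.univ _ fun i _ => ?_
  exact (Polynomial.natDegree_C_mul_X_pow_le _ _).trans (Nat.lt_succ_iff.mp i.isLt)

lemma pc_eval {R : Type*} [CommRing R] {n : ℕ} (c : Fin n → R) (a : R) :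
    Polynomial.eval a (pc c) = ∑ i, c i * a ^ (i : ℕ) := by
  simp [pc, Polynomial.eval_finset_sum]

lemma pc_map {R S : Type*} [CommRing R] [CommRing S] {n : ℕ} (φ : R →+* S) (c : Fin n → R) :
    (pc c).map φ = pc fun i => φ (c i) := by
  simp [pc, Polynomial.map_sum]

lemma pc_coeff {R : Type*} [CommRing R] {n : ℕ} (f : Polynomial R) (h : f.natDegree ≤ n) :
    pc (fun i : Fin (n+1) => f.coeff i) = f := by
  rw [pc, Fin.sum_univ_eq_sum_range (fun i => Polynomial.C (f.coeff i) * Polynomial.X ^ i)]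
  simp only [Polynomial.C_mul_X_pow_eq_monomial]
  exact (Polynomial.as_sum_range' f (n+1) (Nat.lt_succ_of_le h)).symm

lemma dio_core {A : Type*} [CommRing A] (m r : ℕ)
    (F : Fin r → MvPolynomial (Fin 1 ⊕ Fin m) (Polynomial A)) (α δ : ℕ) :
    IsDiophantine1 {a : A | ∃ (c : Fin (α+1) → A) (d : Fin m → Fin (δ+1) → A),
      (∀ j, MvPolynomial.eval (Sum.elim (fun _ => pc c) (fun k => pc (d k))) (F j) = 0) ∧
      Polynomial.eval a (pc c) = 0} := by
  classical
  -- the substitution homomorphism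
  let θ : MvPolynomial (Fin 1 ⊕ Fin m) (Polynomial A) →+*
      Polynomial (MvPolynomial (Fin (α+1) ⊕ Fin m × Fin (δ+1)) A) :=
    MvPolynomial.eval₂Hom (Polynomial.mapRingHom MvPolynomial.C)
      (Sum.elim (fun _ => pc fun i => MvPolynomial.X (Sum.inl i))
        (fun k => pc fun i => MvPolynomial.X (Sum.inr (k, i))))
  have key : ∀ σv : (Fin (α+1) ⊕ Fin m × Fin (δ+1)) → A,
      (Polynomial.mapRingHom (MvPolynomial.eval σv)).comp θ =
      (MvPolynomial.eval (Sum.elim (fun _ : Fin 1 => pc fun i => σv (Sum.inl i))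
        (fun k => pc fun i => σv (Sum.inr (k, i))))) := by
    intro σv
    apply MvPolynomial.ringHom_ext
    · intro p
      have hid : (MvPolynomial.eval σv).comp
          (MvPolynomial.C : A →+* MvPolynomial (Fin (α+1) ⊕ Fin m × Fin (δ+1)) A)
          = RingHom.id A := by ext a; simp
      simp [θ, Polynomial.map_map, hid]
    · rintro (i | k) <;> simp [θ, pc_map]
  -- the new polynomial system
  let e := Fintype.equivFin (Fin (α+1) ⊕ Fin m × Fin (δ+1))
  set m' := Fintype.card (Fin (α+1) ⊕ Fin m × Fin (δ+1)) with hm'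
  let N : ℕ := Finset.univ.sup fun j : Fin r => (θ (F j)).natDegree
  let G : (Fin r × Fin (N+1)) ⊕ Unit → MvPolynomial (Fin 1 ⊕ Fin m') A :=
    Sum.elim
      (fun p => MvPolynomial.rename (fun v => Sum.inr (e v))
        (Polynomial.coeff (θ (F p.1)) p.2))
      (fun _ => ∑ i : Fin (α+1),
        MvPolynomial.X (Sum.inr (e (Sum.inl i))) * (MvPolynomial.X (Sum.inl 0)) ^ (i : ℕ))
  let e2 := Fintype.equivFin ((Fin r × Fin (N+1)) ⊕ Unit)
  refine ⟨m', Fintype.card _, G ∘ e2.symm, fun a => ?_⟩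
  have hGiff : ∀ b : Fin m' → A,
      (∀ j, MvPolynomial.eval (Sum.elim (fun _ => a) b) ((G ∘ e2.symm) j) = 0) ↔
      (∀ u, MvPolynomial.eval (Sum.elim (fun _ => a) b) (G u) = 0) := by
    intro b
    constructor
    · intro h u
      have := h (e2 u)
      simpa using this
    · intro h j; exact h _
  -- evaluation of the renamed coefficient polynomials
  have hcoeff_eval : ∀ (b : Fin m' → A) (j : Fin r) (k : ℕ),
      MvPolynomial.eval (Sum.elim (fun _ : Fin 1 => a) b)
        (MvPolynomial.rename (fun v => Sum.inr (e v)) (Polynomial.coeff (θ (F j)) k))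
      = MvPolynomial.eval (fun v => b (e v)) (Polynomial.coeff (θ (F j)) k) := by
    intro b j k
    rw [MvPolynomial.eval_rename]
    rfl
  constructor
  · rintro ⟨c, d, h1, h2⟩
    set σv : (Fin (α+1) ⊕ Fin m × Fin (δ+1)) → A := Sum.elim c (fun p => d p.1 p.2) with hσv
    refine ⟨fun i => σv (e.symm i), ?_⟩
    rw [hGiff]
    have hmap : ∀ j, Polynomial.map (MvPolynomial.eval σv) (θ (F j)) = 0 := by
      intro j
      have := congrArg (fun φ => φ (F j)) (key σv)
      simp only [RingHom.comp_apply, Polynomial.coe_mapRingHom] at this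
      rw [this]
      exact h1 j
    rintro (⟨j, k⟩ | u)
    · have h0 : MvPolynomial.eval σv (Polynomial.coeff (θ (F j)) k) = 0 := by
        have := congrArg (fun q => Polynomial.coeff q (k : ℕ)) (hmap j)
        simpa [Polynomial.coeff_map] using this
      simp only [G, Sum.elim_inl, hcoeff_eval]
      simpa [Equiv.symm_apply_apply] using h0
    · simp only [G, Sum.elim_inr]
      rw [map_sum]
      have : ∀ i : Fin (α+1),
          MvPolynomial.eval (Sum.elim (fun _ : Fin 1 => a) fun i => σv (e.symm i))
            (MvPolynomial.X (Sum.inr (e (Sum.inl i))) * (MvPolynomial.X (Sum.inl 0)) ^ (i:ℕ))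
          = c i * a ^ (i : ℕ) := by
        intro i
        simp [σv]
      rw [Finset.sum_congr rfl fun i _ => this i]
      rw [pc_eval] at h2
      exact h2
  · rintro ⟨b, hb⟩
    rw [hGiff] at hb
    set σv : (Fin (α+1) ⊕ Fin m × Fin (δ+1)) → A := fun v => b (e v) with hσv
    refine ⟨fun i => σv (Sum.inl i), fun k i => σv (Sum.inr (k, i)), ?_, ?_⟩
    · intro j
      have := congrArg (fun φ => φ (F j)) (key σv)
      simp only [RingHom.comp_apply, Polynomial.coe_mapRingHom] at this
      rw [← this]
      have : Polynomial.map (MvPolynomial.eval σv) (θ (F j)) = 0 := by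
        ext n
        rw [Polynomial.coeff_map, Polynomial.coeff_zero]
        by_cases hn : n ≤ N
        · have := hb (Sum.inl (j, ⟨n, Nat.lt_succ_of_le hn⟩))
          simp only [G, Sum.elim_inl, hcoeff_eval] at this
          exact this
        · have hdeg : (θ (F j)).natDegree ≤ N := Finset.le_sup (f := fun j => (θ (F j)).natDegree) (Finset.mem_univ j)
          rw [Polynomial.coeff_eq_zero_of_natDegree_lt
            (lt_of_le_of_lt hdeg (Nat.lt_of_not_le hn))]
          simp
      rw [this]
    · have := hb (Sum.inr ())
      simp only [G, Sum.elim_inr] at this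
      rw [map_sum] at this
      rw [pc_eval]
      convert this using 1
      refine (Finset.sum_congr rfl fun i _ => ?_).symm
      simp [σv]


/-- If `D ⊆ A[z]` is Diophantine over `A[z]`, then for every `α ≥ 0`
both `Zero(D_α) = {a ∈ A : f(a) = 0 for some f ∈ D with deg f ≤ α}` and
`Zero(D) = {a ∈ A : f(a) = 0 for some f ∈ D}` are countable unions of sets that are
Diophantine over `A`. -/
theorem zeroSet_countable_union_of_diophantine
    {A : Type*} [CommRing A] (D : Set (Polynomial A)) (hD : IsDiophantine1 D) (α : ℕ) :
    (∃ E : ℕ → Set A, (∀ β : ℕ, IsDiophantine1 (E β)) ∧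
      {a : A | ∃ f ∈ D, f.natDegree ≤ α ∧ Polynomial.eval a f = 0} = ⋃ β, E β) ∧
    (∃ E : ℕ → Set A, (∀ β : ℕ, IsDiophantine1 (E β)) ∧
      {a : A | ∃ f ∈ D, Polynomial.eval a f = 0} = ⋃ β, E β) := by
  obtain ⟨m, r, F, hF⟩ := hD
  set Eset : ℕ → ℕ → Set A := fun α' δ =>
    {a | ∃ (c : Fin (α'+1) → A) (d : Fin m → Fin (δ+1) → A),
      (∀ j, MvPolynomial.eval (Sum.elim (fun _ => pc c) (fun k => pc (d k))) (F j) = 0) ∧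
      Polynomial.eval a (pc c) = 0} with hEset
  have hdio : ∀ α' δ, IsDiophantine1 (Eset α' δ) := fun α' δ => dio_core m r F α' δ
  have hcup : ∀ α', {a : A | ∃ f ∈ D, f.natDegree ≤ α' ∧ Polynomial.eval a f = 0}
      = ⋃ δ, Eset α' δ := by
    intro α'
    ext a
    simp only [Set.mem_iUnion, Set.mem_setOf_eq, hEset]
    constructor
    · rintro ⟨f, hfD, hdeg, hev⟩
      obtain ⟨g, hg⟩ := (hF f).mp hfD
      refine ⟨Finset.univ.sup fun k => (g k).natDegree, fun i => f.coeff i,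
        fun k i => (g k).coeff i, ?_, ?_⟩
      · intro j
        have hgk : ∀ k, pc (fun i : Fin ((Finset.univ.sup fun k => (g k).natDegree)+1)
            => (g k).coeff i) = g k := fun k =>
          pc_coeff (g k) (Finset.le_sup (f := fun k => (g k).natDegree) (Finset.mem_univ k))
        have hfun : (Sum.elim (fun _ : Fin 1 =>
            pc (fun i : Fin (α'+1) => f.coeff i))
            (fun k => pc (fun i : Fin ((Finset.univ.sup fun k => (g k).natDegree)+1)
              => (g k).coeff i))) = Sum.elim (fun _ => f) g := by
          funext v
          cases v with
          | inl i => simpa only [Sum.elim_inl] using pc_coeff f hdeg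
          | inr k => simpa only [Sum.elim_inr] using hgk k
        rw [hfun]
        exact hg j
      · rw [pc_coeff f hdeg]; exact hev
    · rintro ⟨δ, c, d, h1, h2⟩
      exact ⟨pc c, (hF _).mpr ⟨fun k => pc (d k), h1⟩, pc_natDegree_le c, h2⟩
  constructor
  · exact ⟨Eset α, fun β => hdio α β, hcup α⟩
  · refine ⟨fun n => Eset (Nat.unpair n).1 (Nat.unpair n).2, fun n => hdio _ _, ?_⟩
    ext a
    simp only [Set.mem_iUnion, Set.mem_setOf_eq]
    constructor
    · rintro ⟨f, hfD, hev⟩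
      have hmem : a ∈ {a : A | ∃ g ∈ D, g.natDegree ≤ f.natDegree ∧ Polynomial.eval a g = 0} :=
        ⟨f, hfD, le_refl _, hev⟩
      rw [hcup f.natDegree] at hmem
      obtain ⟨δ, hδ⟩ := Set.mem_iUnion.mp hmem
      refine ⟨Nat.pair f.natDegree δ, ?_⟩
      rw [Nat.unpair_pair]
      exact hδ
    · rintro ⟨n, hn⟩
      have hmem : a ∈ {a : A | ∃ g ∈ D, g.natDegree ≤ (Nat.unpair n).1
          ∧ Polynomial.eval a g = 0} := by
        rw [hcup]
        exact Set.mem_iUnion.mpr ⟨_, hn⟩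
      obtain ⟨f, hfD, _, hev⟩ := hmem
      exact ⟨f, hfD, hev⟩
end

section
/- The set ℝ − ℚ of real numbers that are not rational, regarded as a subset of the constant polynomials in ℝ[z], is not Diophantine over ℝ[z]. -/
/-!
A polynomial identity over `𝕜[z]` holds iff it holds after evaluating at every `t : 𝕜`. If the
unknowns `b_i` are restricted to degree `< d`, their coefficients range over a finite-dimensional
space on which these evaluated identities depend continuously, so the set of constants `a` for
which the system has a solution is a countable union (over `d`) of projections of closed sets,
hence σ-compact. But the irrationals are not σ-compact: otherwise `ℚ` would be a dense Gδ set
disjoint from the dense Gδ set of irrationals, contradicting Baire's theorem.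
-/

open Polynomial Set

theorem IsGδ.not_isSigmaCompact_of_dense_compl {X : Type*} [TopologicalSpace X] [T2Space X]
    [BaireSpace X] [Nonempty X] {s : Set X} (hs : IsGδ s) (hd : Dense s) (hdc : Dense sᶜ) :
    ¬ IsSigmaCompact s := by
  rintro ⟨K, hK, rfl⟩
  have hGδ : IsGδ (⋃ n, K n)ᶜ := by
    rw [compl_iUnion]
    exact .iInter_of_isOpen fun n => (hK n).isClosed.isOpen_compl
  obtain ⟨x, hx, hxc⟩ := (hd.inter_of_Gδ hs hGδ hdc).nonempty
  exact hxc hx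

theorem not_isSigmaCompact_setOf_irrational : ¬ IsSigmaCompact {x : ℝ | Irrational x} :=
  IsGδ.setOfPred_irrational.not_isSigmaCompact_of_dense_compl dense_irrational
    (by rw [show {x : ℝ | Irrational x} = (range ((↑) : ℚ → ℝ))ᶜ from rfl, compl_compl]
        exact Rat.denseRange_cast)

theorem Polynomial.eval_mvPolynomial_eval {R σ : Type*} [CommSemiring R] (t : R)
    (v : σ → R[X]) (p : MvPolynomial σ R[X]) :
    (MvPolynomial.eval v p).eval t =
      MvPolynomial.eval (fun i => (v i).eval t) (p.map (evalRingHom t)) := by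
  rw [MvPolynomial.eval_map, ← coe_evalRingHom]
  simpa [Function.comp_def] using
    MvPolynomial.eval₂_comp_left (evalRingHom t) (RingHom.id _) v p

theorem MvPolynomial.eval_eq_zero_iff_forall_eval_map {R σ : Type*} [CommRing R] [IsDomain R]
    [Infinite R] (v : σ → R[X]) (p : MvPolynomial σ R[X]) :
    MvPolynomial.eval v p = 0 ↔
      ∀ t, MvPolynomial.eval (fun i => (v i).eval t) (p.map (evalRingHom t)) = 0 := by
  simp only [← eval_mvPolynomial_eval]
  exact ⟨fun h t => by simp [h], fun h => Polynomial.funext fun t => by simpa using h t⟩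

theorem Polynomial.exists_degreeLTEquiv_symm_eq {R ι : Type*} [CommRing R] [Finite ι]
    (b : ι → R[X]) :
    ∃ (d : ℕ) (c : ι → Fin d → R),
      ∀ i, ((degreeLTEquiv R d).symm (c i) : R[X]) = b i := by
  obtain ⟨N, hN⟩ := Finite.exists_le fun i => (b i).natDegree
  have hb i : b i ∈ degreeLT R (N + 1) :=
    mem_degreeLT.2 <| degree_le_natDegree.trans_lt <| by
      exact_mod_cast Nat.lt_succ_of_le (hN i)
  exact ⟨N + 1, fun i => degreeLTEquiv R _ ⟨b i, hb i⟩, fun i => by simp⟩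

theorem Polynomial.continuous_eval_degreeLTEquiv_symm {𝕜 : Type*} [NontriviallyNormedField 𝕜]
    [CompleteSpace 𝕜] (d : ℕ) (t : 𝕜) :
    Continuous fun c : Fin d → 𝕜 => ((degreeLTEquiv 𝕜 d).symm c : 𝕜[X]).eval t :=
  (leval t ∘ₗ (degreeLT 𝕜 d).subtype ∘ₗ
    (degreeLTEquiv 𝕜 d).symm.toLinearMap).continuous_of_finiteDimensional

def degreeLTSolutions {R σ ι J : Type*} [CommRing R] (p : J → MvPolynomial (σ ⊕ ι) R[X])
    (d : ℕ) : Set (R × (ι → Fin d → R)) :=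
  {x | ∀ j, MvPolynomial.eval
    (Sum.elim (fun _ => C x.1) fun i => ((degreeLTEquiv R d).symm (x.2 i) : R[X])) (p j) = 0}

section
variable {𝕜 σ ι J : Type*} [NontriviallyNormedField 𝕜]

theorem isClosed_degreeLTSolutions [CompleteSpace 𝕜] (p : J → MvPolynomial (σ ⊕ ι) 𝕜[X])
    (d : ℕ) : IsClosed (degreeLTSolutions p d) := by
  simp_rw [degreeLTSolutions, MvPolynomial.eval_eq_zero_iff_forall_eval_map, ofPred_forall]
  refine isClosed_iInter fun j => isClosed_iInter fun t => isClosed_eq ?_ continuous_const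
  refine (MvPolynomial.continuous_eval _).comp (continuous_pi fun k => ?_)
  rcases k with _ | i
  · simpa using continuous_fst
  · exact (continuous_eval_degreeLTEquiv_symm d t).comp
      ((continuous_apply i).comp continuous_snd)

theorem isSigmaCompact_setOf_exists_polynomial_solution [ProperSpace 𝕜] [Finite ι]
    (p : J → MvPolynomial (σ ⊕ ι) 𝕜[X]) :
    IsSigmaCompact {a : 𝕜 | ∃ b : ι → 𝕜[X], ∀ j,
      MvPolynomial.eval (Sum.elim (fun _ => C a) b) (p j) = 0} := by
  have hS : {a : 𝕜 | ∃ b : ι → 𝕜[X], ∀ j,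
      MvPolynomial.eval (Sum.elim (fun _ => C a) b) (p j) = 0} =
      ⋃ d, Prod.fst '' degreeLTSolutions p d := by
    ext a
    simp only [degreeLTSolutions, mem_ofPred_eq, mem_iUnion, mem_image, Prod.exists,
      exists_and_right, exists_eq_right]
    constructor
    · rintro ⟨b, hb⟩
      obtain ⟨d, c, hc⟩ := exists_degreeLTEquiv_symm_eq b
      exact ⟨d, c, by simpa only [hc] using hb⟩
    · rintro ⟨d, c, hc⟩
      exact ⟨_, hc⟩
  rw [hS]
  exact isSigmaCompact_iUnion _ fun d => .image continuous_fst <|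
    isSigmaCompact_univ.of_isClosed_subset (isClosed_degreeLTSolutions p d) (subset_univ _)

end

/-- The set `ℝ − ℚ`, regarded as a set of constant polynomials in `ℝ[z]`,
is not Diophantine over `ℝ[z]`. -/
theorem real_sub_rat_not_diophantine :
    ¬ IsDiophantine1
      {f : Polynomial ℝ | ∃ a : ℝ, f = Polynomial.C a ∧ ¬ ∃ q : ℚ, a = (q : ℝ)} := by
  rintro ⟨m, r, F, hF⟩
  have hirr : {x : ℝ | Irrational x} = {a | ∃ b : Fin m → ℝ[X], ∀ j,
      MvPolynomial.eval (Sum.elim (fun _ => C a) b) (F j) = 0} := by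
    ext a
    rw [mem_ofPred_eq, mem_ofPred_eq, ← hF]
    simp [Irrational, eq_comm]
  exact not_isSigmaCompact_setOf_irrational <|
    hirr ▸ isSigmaCompact_setOf_exists_polynomial_solution F
end

section
/- Assume Kollár's conjecture: every set D ⊆ ℂ(z) that is Diophantine over ℂ(z) and contains, for infinitely many integers n ≥ 0, a nonempty Zariski open subset of ℂ[z]_n = ℂ^{n+1} (the polynomials of degree at most n, identified with ℂ^{n+1} via coefficients), has finite complement ℂ(z) − D. Then the set Der = {f' : f ∈ ℂ(z)} of derivatives of rational functions is not Diophantine over ℂ(z). -/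
/-- `D ⊆ k(z)` contains a nonempty Zariski open subset of `k[z]_n = k^{n+1}` (the
polynomials of degree at most `n`, identified with `k^{n+1}` via coefficients): there are
finitely many polynomials `G₁,…,G_r` in `n+1` variables whose common zero set has nonempty
complement `U`, and every polynomial of degree at most `n` whose coefficient vector lies in
`U` belongs to `D`. -/
def ContainsZariskiOpen {k : Type*} [Field k] (D : Set (RatFunc k)) (n : ℕ) : Prop :=
  ∃ (r : ℕ) (G : Fin r → MvPolynomial (Fin (n + 1)) k),
    (∃ c : Fin (n + 1) → k, ∃ j : Fin r, MvPolynomial.eval c (G j) ≠ 0) ∧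
    ∀ c : Fin (n + 1) → k, (∃ j : Fin r, MvPolynomial.eval c (G j) ≠ 0) →
      algebraMap (Polynomial k) (RatFunc k)
        (∑ i : Fin (n + 1), Polynomial.C (c i) * Polynomial.X ^ (i : ℕ)) ∈ D

/-- **Kollár's conjecture**: every Diophantine set `D ⊆ ℂ(z)` which, for infinitely many
`n ≥ 0`, contains a nonempty Zariski open subset of `ℂ[z]_n = ℂ^{n+1}`, has finite
complement. -/
def KollarConjecture : Prop :=
  ∀ D : Set (RatFunc ℂ), IsDiophantine1 D →
    {n : ℕ | ContainsZariskiOpen D n}.Infinite → Dᶜ.Finite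

/-- The derivative of a rational function `f = p/q` (in lowest terms):
`f' = (p'q − pq')/q²`. -/
noncomputable def ratFuncDeriv (f : RatFunc ℂ) : RatFunc ℂ :=
  (algebraMap (Polynomial ℂ) (RatFunc ℂ) (Polynomial.derivative f.num) *
      algebraMap (Polynomial ℂ) (RatFunc ℂ) f.denom -
    algebraMap (Polynomial ℂ) (RatFunc ℂ) f.num *
      algebraMap (Polynomial ℂ) (RatFunc ℂ) (Polynomial.derivative f.denom)) /
    algebraMap (Polynomial ℂ) (RatFunc ℂ) f.denom ^ 2

open Polynomial in
/-- Key lemma: `c/X` (for `c ≠ 0`) is not the derivative of any rational function. -/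
lemma c_div_X_not_deriv (c : ℂ) (hc : c ≠ 0) (f : RatFunc ℂ) :
    algebraMap (Polynomial ℂ) (RatFunc ℂ) (C c) / algebraMap (Polynomial ℂ) (RatFunc ℂ) X
      ≠ (algebraMap (Polynomial ℂ) (RatFunc ℂ) (Polynomial.derivative f.num) *
          algebraMap (Polynomial ℂ) (RatFunc ℂ) f.denom -
        algebraMap (Polynomial ℂ) (RatFunc ℂ) f.num *
          algebraMap (Polynomial ℂ) (RatFunc ℂ) (Polynomial.derivative f.denom)) /
        algebraMap (Polynomial ℂ) (RatFunc ℂ) f.denom ^ 2 := by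
  intro h
  set p := f.num with hp
  set q := f.denom with hqdef
  have hq : q ≠ 0 := f.denom_ne_zero
  have hmon : q.Monic := RatFunc.monic_denom f
  have hcop : IsCoprime p q := RatFunc.isCoprime_num_denom f
  have hX : algebraMap (Polynomial ℂ) (RatFunc ℂ) X ≠ 0 :=
    RatFunc.algebraMap_ne_zero X_ne_zero
  have hq2 : (algebraMap (Polynomial ℂ) (RatFunc ℂ) q) ^ 2 ≠ 0 :=
    pow_ne_zero 2 (RatFunc.algebraMap_ne_zero hq)
  rw [div_eq_div_iff hX hq2] at h
  have E : C c * q ^ 2 = (derivative p * q - p * derivative q) * X := by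
    apply RatFunc.algebraMap_injective
    simpa only [map_mul, map_sub, map_pow] using h
  -- q(0) = 0
  have h0 : q.eval 0 = 0 := by
    have hE := congrArg (Polynomial.eval 0) E
    simp only [eval_mul, eval_pow, eval_C, eval_sub, eval_X, mul_zero] at hE
    have h2 : q.eval 0 ^ 2 = 0 := (mul_eq_zero.mp hE).resolve_left hc
    exact pow_eq_zero_iff two_ne_zero |>.mp h2
  set n := q.natDegree with hndef
  have hn : n ≠ 0 := by
    intro hn0
    have hqC : q = C (q.eval 0) := by
      rw [← coeff_zero_eq_eval_zero]; exact eq_C_of_natDegree_eq_zero hn0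
    rw [h0, map_zero] at hqC
    exact hq hqC
  -- q ∣ X * q'
  have h1 : q ∣ p * (X * derivative q) := ⟨derivative p * X - C c * q, by linear_combination E⟩
  have hdq : q ∣ X * derivative q := hcop.symm.dvd_of_dvd_mul_left h1
  obtain ⟨w, hw⟩ := hdq
  have hq' : derivative q ≠ 0 := by
    intro hz
    exact hn (natDegree_eq_zero_of_derivative_eq_zero hz)
  have hw0 : w ≠ 0 := by
    rintro rfl
    simp only [mul_zero] at hw
    exact (mul_ne_zero X_ne_zero hq') hw
  have hwdeg : w.natDegree = 0 := by
    have hlt : (derivative q).natDegree < n := natDegree_derivative_lt hn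
    have hL : (X * derivative q).natDegree = 1 + (derivative q).natDegree := by
      rw [natDegree_mul X_ne_zero hq', natDegree_X]
    have hR : (q * w).natDegree = n + w.natDegree := natDegree_mul hq hw0
    rw [← hw, hL] at hR
    omega
  set d := w.coeff 0 with hddef
  have hwC : w = C d := eq_C_of_natDegree_eq_zero hwdeg
  have hEq : X * derivative q = C d * q := by rw [hw, hwC, mul_comm]
  -- identify d = n
  have hcoeffn : (n : ℂ) = d := by
    obtain ⟨m, hm⟩ : ∃ m, n = m + 1 := ⟨n - 1, by omega⟩
    have hco := congrArg (fun r : Polynomial ℂ => r.coeff n) hEq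
    simp only [hm, coeff_X_mul, coeff_derivative, coeff_C_mul] at hco
    have hlead : q.coeff (m + 1) = 1 := by
      have hmc := hmon.coeff_natDegree
      rwa [← hndef, hm] at hmc
    rw [hlead, one_mul, mul_one] at hco
    rw [hm]; push_cast; exact hco
  -- all coefficients except n vanish
  have hco : ∀ k : ℕ, k ≠ n → q.coeff k = 0 := by
    intro k hk
    have := congrArg (fun r : Polynomial ℂ => r.coeff k) hEq
    simp only [coeff_C_mul] at this
    rcases k with _ | j
    · -- k = 0
      rw [coeff_X_mul_zero] at this
      have hd0 : d ≠ 0 := by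
        intro hd0; rw [hd0] at hcoeffn
        exact hn (Nat.cast_eq_zero.mp hcoeffn)
      exact (mul_eq_zero.mp this.symm).resolve_left hd0
    · rw [coeff_X_mul, coeff_derivative] at this
      have hne : ((j : ℂ) + 1) - d ≠ 0 := by
        rw [← hcoeffn]
        intro hz
        apply hk
        have hjn : ((j + 1 : ℕ) : ℂ) = (n : ℂ) := by push_cast; linear_combination hz
        exact_mod_cast hjn
      have : q.coeff (j + 1) * (((j : ℂ) + 1) - d) = 0 := by linear_combination this
      exact (mul_eq_zero.mp this).resolve_right hne
  have hqX : q = X ^ n := by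
    ext k
    rw [coeff_X_pow]
    by_cases hkn : k = n
    · subst hkn
      simp only [if_pos rfl]
      have := hmon.coeff_natDegree
      rwa [← hndef] at this
    · rw [if_neg hkn]
      exact hco k hkn
  -- plug in q = X^n
  rw [hqX, derivative_X_pow] at E
  have hxp : (X : Polynomial ℂ) ^ (n - 1) * X = X ^ n := by
    rw [← pow_succ]
    congr 1
    omega
  have E2 : (X : Polynomial ℂ) ^ n * (C c * X ^ n)
      = X ^ n * (derivative p * X - C (n : ℂ) * p) := by
    linear_combination E - C (n : ℂ) * p * hxp
  have E3 : C c * X ^ n = derivative p * X - C (n : ℂ) * p :=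
    mul_left_cancel₀ (pow_ne_zero n X_ne_zero) E2
  have hp0 : p.eval 0 = 0 := by
    have := congrArg (Polynomial.eval 0) E3
    simp only [eval_mul, eval_pow, eval_C, eval_sub, eval_X, mul_zero] at this
    rw [zero_pow hn, mul_zero] at this
    have hnC : (n : ℂ) ≠ 0 := Nat.cast_ne_zero.mpr hn
    have h3 : (n : ℂ) * p.eval 0 = 0 := by linear_combination this
    exact (mul_eq_zero.mp h3).resolve_left hnC
  obtain ⟨u, v, huv⟩ := hcop
  have := congrArg (Polynomial.eval 0) huv
  simp only [eval_add, eval_mul, eval_one, hp0, h0, mul_zero] at this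
  norm_num at this

/-- Assuming Kollár's conjecture, the set `Der = {f' : f ∈ ℂ(z)}` of
derivatives of rational functions is not Diophantine over `ℂ(z)`. -/
theorem derivatives_not_diophantine (hK : KollarConjecture) :
    ¬ IsDiophantine1 {g : RatFunc ℂ | ∃ f : RatFunc ℂ, g = ratFuncDeriv f} := by
  intro hD
  set D : Set (RatFunc ℂ) := {g : RatFunc ℂ | ∃ f : RatFunc ℂ, g = ratFuncDeriv f} with hDdef
  have hpoly : ∀ P : Polynomial ℂ, (∃ Q : Polynomial ℂ, Polynomial.derivative Q = P) →
      algebraMap (Polynomial ℂ) (RatFunc ℂ) P ∈ D := by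
    rintro P ⟨Q, hQ⟩
    refine ⟨algebraMap _ _ Q, ?_⟩
    rw [ratFuncDeriv, RatFunc.num_algebraMap, RatFunc.denom_algebraMap, hQ]
    simp
  have hanti : ∀ (n : ℕ) (c : Fin (n+1) → ℂ), ∃ Q : Polynomial ℂ,
      Polynomial.derivative Q = ∑ i : Fin (n+1), Polynomial.C (c i) * Polynomial.X ^ (i:ℕ) := by
    intro n c
    refine ⟨∑ i : Fin (n+1), Polynomial.C (c i / ((i:ℕ)+1)) * Polynomial.X ^ ((i:ℕ)+1), ?_⟩
    rw [map_sum]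
    refine Finset.sum_congr rfl fun i _ => ?_
    simp only [Polynomial.derivative_C_mul_X_pow, Nat.add_sub_cancel]
    congr 1
    rw [Nat.cast_add, Nat.cast_one, div_mul_cancel₀]
    exact Nat.cast_add_one_ne_zero _
  have hzar : {n : ℕ | ContainsZariskiOpen D n}.Infinite := by
    have heq : {n : ℕ | ContainsZariskiOpen D n} = Set.univ := by
      ext n
      simp only [Set.mem_setOf_eq, Set.mem_univ, iff_true]
      refine ⟨1, fun _ => 1, ⟨fun _ => 0, ⟨0, by simp⟩⟩, ?_⟩
      intro c _
      exact hpoly _ (hanti n c)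
    rw [heq]; exact Set.infinite_univ
  have hfin : Dᶜ.Finite := hK D hD hzar
  have hX : algebraMap (Polynomial ℂ) (RatFunc ℂ) Polynomial.X ≠ 0 :=
    RatFunc.algebraMap_ne_zero Polynomial.X_ne_zero
  have hinf : Dᶜ.Infinite := by
    apply Set.infinite_of_injective_forall_mem
      (f := fun k : ℕ => algebraMap (Polynomial ℂ) (RatFunc ℂ) (Polynomial.C ((k:ℂ)+1)) /
        algebraMap (Polynomial ℂ) (RatFunc ℂ) Polynomial.X)
    · intro a b hab
      simp only at hab
      rw [div_eq_div_iff hX hX] at hab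
      have h2 := RatFunc.algebraMap_injective ℂ (mul_right_cancel₀ hX hab)
      have h3 := Polynomial.C_injective h2
      have h4 : (a : ℂ) = b := by linear_combination h3
      exact_mod_cast h4
    · intro k
      simp only [Set.mem_compl_iff, hDdef, Set.mem_setOf_eq]
      rintro ⟨f, hf⟩
      rw [ratFuncDeriv] at hf
      exact c_div_X_not_deriv ((k:ℂ)+1) (Nat.cast_add_one_ne_zero k) f hf
  exact hinf hfin
end

section
/- Assume Kollár's conjecture: every set D ⊆ ℂ(z) that is Diophantine over ℂ(z) and contains, for infinitely many integers n ≥ 0, a nonempty Zariski open subset of ℂ[z]_n = ℂ^{n+1} (the polynomials of degree at most n, identified with ℂ^{n+1} via coefficients), has finite complement ℂ(z) − D. Then the set 𝒩 = ℂ(z) − {f² : f ∈ ℂ(z)} of non-squares in ℂ(z) is not Diophantine over ℂ(z). -/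
lemma odd_deg_nonsquare (p : Polynomial ℂ) (hp : Odd p.natDegree) :
    ¬ ∃ f : RatFunc ℂ, algebraMap (Polynomial ℂ) (RatFunc ℂ) p = f ^ 2 := by
  rintro ⟨f, hf⟩
  have hp0 : p ≠ 0 := by
    rintro rfl; simp at hp
  have hf0 : f ≠ 0 := by
    rintro rfl
    simp only [ne_eq, zero_pow, two_ne_zero, not_false_iff] at hf
    exact hp0 ((map_eq_zero_iff _ (RatFunc.algebraMap_injective ℂ)).mp (by simpa using hf))
  have h1 : RatFunc.intDegree (algebraMap (Polynomial ℂ) (RatFunc ℂ) p) = p.natDegree :=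
    RatFunc.intDegree_polynomial
  have h2 : RatFunc.intDegree (f ^ 2) = 2 * f.intDegree := by
    rw [sq, RatFunc.intDegree_mul hf0 hf0]; ring
  rw [hf, h2] at h1
  have hodd : Odd ((p.natDegree : ℤ)) := Int.odd_coe_nat _ |>.mpr hp
  rw [← h1] at hodd
  exact (Int.not_odd_iff_even.mpr ⟨f.intDegree, two_mul _⟩) hodd

lemma natDegree_sum_fin {n : ℕ} (c : Fin (n + 1) → ℂ) (hc : c (Fin.last n) ≠ 0) :
    (∑ i : Fin (n + 1), Polynomial.C (c i) * Polynomial.X ^ (i : ℕ)).natDegree = n := by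
  set p := ∑ i : Fin (n + 1), Polynomial.C (c i) * Polynomial.X ^ (i : ℕ) with hp
  have hcoeff : p.coeff n = c (Fin.last n) := by
    rw [hp, Polynomial.finset_sum_coeff]
    rw [Finset.sum_eq_single (Fin.last n)]
    · simp [Fin.last]
    · intro i _ hi
      simp only [Polynomial.coeff_C_mul, Polynomial.coeff_X_pow]
      rw [if_neg, mul_zero]
      intro h
      exact hi (Fin.ext (by simp [Fin.last, h.symm]))
    · simp
  have hle : p.natDegree ≤ n := by
    apply Polynomial.natDegree_sum_le_of_forall_le
    intro i _
    apply le_trans (Polynomial.natDegree_C_mul_le _ _)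
    simpa using Nat.le_of_lt_succ i.isLt
  exact le_antisymm hle (Polynomial.le_natDegree_of_ne_zero (hcoeff ▸ hc))

/-- Assuming Kollár's conjecture, the set `𝒩 = ℂ(z) − {f² : f ∈ ℂ(z)}`
of non-squares is not Diophantine over `ℂ(z)`. -/
theorem nonsquares_not_diophantine (hK : KollarConjecture) :
    ¬ IsDiophantine1 {g : RatFunc ℂ | ¬ ∃ f : RatFunc ℂ, g = f ^ 2} := by
  intro hD
  have hInf : {n : ℕ | ContainsZariskiOpen {g : RatFunc ℂ | ¬ ∃ f : RatFunc ℂ, g = f ^ 2} n}.Infinite := by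
    apply Set.infinite_of_injective_forall_mem (f := fun k : ℕ => 2 * k + 1)
    · intro a b h; simp only at h; omega
    · intro k
      refine ⟨1, fun _ => MvPolynomial.X (Fin.last (2 * k + 1)), ⟨fun _ => 1, 0, by simp⟩, ?_⟩
      rintro c ⟨j, hj⟩
      simp only [MvPolynomial.eval_X] at hj
      have hdeg := natDegree_sum_fin c hj
      exact odd_deg_nonsquare _ (by rw [hdeg]; exact ⟨k, by ring⟩)
  have hfin := hK _ hD hInf
  have hinf2 : ({g : RatFunc ℂ | ¬ ∃ f : RatFunc ℂ, g = f ^ 2}ᶜ).Infinite := by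
    apply Set.infinite_of_injective_forall_mem
      (f := fun c : ℂ => algebraMap (Polynomial ℂ) (RatFunc ℂ) (Polynomial.C c))
    · intro a b h
      exact Polynomial.C_injective ((RatFunc.algebraMap_injective ℂ) h)
    · intro c
      obtain ⟨e, he⟩ := IsAlgClosed.exists_pow_nat_eq c (n := 2) (by norm_num)
      simp only [Set.mem_compl_iff, Set.mem_setOf_eq, not_not]
      exact ⟨algebraMap (Polynomial ℂ) (RatFunc ℂ) (Polynomial.C e),
        by rw [← map_pow, ← map_pow, he]⟩
  exact hinf2 hfin
end

section
/- Assume Kollár's conjecture: every set D ⊆ ℂ(z) that is Diophantine over ℂ(z) and contains, for infinitely many integers n ≥ 0, a nonempty Zariski open subset of ℂ[z]_n = ℂ^{n+1} (the polynomials of degree at most n, identified with ℂ^{n+1} via coefficients), has finite complement ℂ(z) − D. Then for every point x ∈ ℙ¹(ℂ), the valuation ring 𝒪_x = {f ∈ ℂ(z) : v_x(f) ≥ 0} is not Diophantine over ℂ(z); in particular 𝒪_∞ = {f ∈ ℂ(z) : v_∞(f) ≥ 0} is not Diophantine over ℂ(z). -/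
/-- The order of vanishing `v_a(f)` of `f = p/q ∈ ℂ(z)` (in lowest terms) at a point
`a ∈ ℂ`: the multiplicity of `a` as a root of `p` minus its multiplicity as a root of `q`
(negative at poles). -/
noncomputable def ordAt (a : ℂ) (f : RatFunc ℂ) : ℤ :=
  (f.num.rootMultiplicity a : ℤ) - (f.denom.rootMultiplicity a : ℤ)

/-- The order of vanishing `v_∞(f)` of `f = p/q ∈ ℂ(z)` (in lowest terms) at `∞`:
`deg q − deg p`. -/
noncomputable def ordAtInfty (f : RatFunc ℂ) : ℤ :=
  (f.denom.natDegree : ℤ) - (f.num.natDegree : ℤ)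

lemma aux_num_eq (x : RatFunc ℂ) :
    algebraMap (Polynomial ℂ) (RatFunc ℂ) x.num
      = x * algebraMap (Polynomial ℂ) (RatFunc ℂ) x.denom := by
  have h := RatFunc.num_div_denom x
  have hd : algebraMap (Polynomial ℂ) (RatFunc ℂ) x.denom ≠ 0 :=
    RatFunc.algebraMap_ne_zero (RatFunc.denom_ne_zero x)
  rw [div_eq_iff hd] at h
  exact h

lemma aux_ordAt_mul (a : ℂ) {f g : RatFunc ℂ} (hf : f ≠ 0) (hg : g ≠ 0) :
    ordAt a (f * g) = ordAt a f + ordAt a g := by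
  have hfg : f * g ≠ 0 := mul_ne_zero hf hg
  have hkey : algebraMap (Polynomial ℂ) (RatFunc ℂ)
      ((f*g).num * (f.denom * g.denom))
      = algebraMap (Polynomial ℂ) (RatFunc ℂ) (f.num * g.num * (f*g).denom) := by
    rw [map_mul, map_mul, map_mul, map_mul, aux_num_eq (f*g), aux_num_eq f, aux_num_eq g]
    ring
  have hpoly : (f*g).num * (f.denom * g.denom) = f.num * g.num * (f*g).denom :=
    RatFunc.algebraMap_injective ℂ hkey
  have h1 : ((f*g).num * (f.denom * g.denom)).rootMultiplicity a
      = (f.num * g.num * (f*g).denom).rootMultiplicity a := by rw [hpoly]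
  have hn1 : (f*g).num ≠ 0 := RatFunc.num_ne_zero hfg
  have hn2 : f.num ≠ 0 := RatFunc.num_ne_zero hf
  have hn3 : g.num ≠ 0 := RatFunc.num_ne_zero hg
  have hd1 := RatFunc.denom_ne_zero (f*g)
  have hd2 := RatFunc.denom_ne_zero f
  have hd3 := RatFunc.denom_ne_zero g
  rw [Polynomial.rootMultiplicity_mul (mul_ne_zero hn1 (mul_ne_zero hd2 hd3)),
    Polynomial.rootMultiplicity_mul (mul_ne_zero hd2 hd3),
    Polynomial.rootMultiplicity_mul (mul_ne_zero (mul_ne_zero hn2 hn3) hd1),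
    Polynomial.rootMultiplicity_mul (mul_ne_zero hn2 hn3)] at h1
  unfold ordAt
  omega

lemma aux_ordAt_one (a : ℂ) : ordAt a (1 : RatFunc ℂ) = 0 := by
  unfold ordAt
  rw [RatFunc.num_one, RatFunc.denom_one]
  simp

lemma aux_ordAt_inv (a : ℂ) {f : RatFunc ℂ} (hf : f ≠ 0) :
    ordAt a f⁻¹ = -ordAt a f := by
  have := aux_ordAt_mul a hf (inv_ne_zero hf)
  rw [mul_inv_cancel₀ hf, aux_ordAt_one] at this
  omega

lemma aux_ordAtInfty_eq (f : RatFunc ℂ) : ordAtInfty f = -f.intDegree := by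
  unfold ordAtInfty RatFunc.intDegree
  omega

lemma aux_intDegree_inv {f : RatFunc ℂ} (hf : f ≠ 0) :
    f⁻¹.intDegree = -f.intDegree := by
  have := RatFunc.intDegree_mul hf (inv_ne_zero hf)
  rw [mul_inv_cancel₀ hf, RatFunc.intDegree_one] at this
  omega

lemma aux_dioph_comb {R : Type*} [CommRing R] {O : Set R}
    (h : IsDiophantine1 O) :
    IsDiophantine1 {f : R | ∃ g, f * f * g = f ∧ g ∈ O} := by
  obtain ⟨m, r, F, hF⟩ := h
  refine ⟨m + 1, r + 1,
    Fin.cons (MvPolynomial.X (Sum.inl 0) * MvPolynomial.X (Sum.inl 0) *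
        MvPolynomial.X (Sum.inr 0) - MvPolynomial.X (Sum.inl 0))
      (fun j => MvPolynomial.rename
        (Sum.elim (fun _ : Fin 1 => Sum.inr 0) (fun i : Fin m => Sum.inr i.succ)) (F j)),
    fun a => ?_⟩
  constructor
  · rintro ⟨g, hfg, hgO⟩
    obtain ⟨b₀, hb₀⟩ := (hF g).mp hgO
    refine ⟨Fin.cons g b₀, fun j => ?_⟩
    refine Fin.cases ?_ (fun i => ?_) j
    · rw [Fin.cons_zero]
      simp only [map_sub, map_mul, MvPolynomial.eval_X, Sum.elim_inl, Sum.elim_inr,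
        Fin.cons_zero]
      rw [hfg, sub_self]
    · rw [Fin.cons_succ, MvPolynomial.eval_rename]
      have hfun : (Sum.elim (fun _ : Fin 1 => a) (Fin.cons g b₀) ∘
          Sum.elim (fun _ : Fin 1 => Sum.inr 0) (fun i : Fin m => Sum.inr i.succ))
          = Sum.elim (fun _ : Fin 1 => g) b₀ := by
        funext x
        rcases x with x | x <;> simp
      rw [hfun]
      exact hb₀ i
  · rintro ⟨b, hb⟩
    refine ⟨b 0, ?_, ?_⟩
    · have h0 := hb 0
      rw [Fin.cons_zero] at h0
      simp only [map_sub, map_mul, MvPolynomial.eval_X, Sum.elim_inl, Sum.elim_inr] at h0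
      exact sub_eq_zero.mp h0
    · refine (hF (b 0)).mpr ⟨fun i => b i.succ, fun j => ?_⟩
      have hj := hb j.succ
      rw [Fin.cons_succ, MvPolynomial.eval_rename] at hj
      have hfun : (Sum.elim (fun _ : Fin 1 => a) b ∘
          Sum.elim (fun _ : Fin 1 => Sum.inr 0) (fun i : Fin m => Sum.inr i.succ))
          = Sum.elim (fun _ : Fin 1 => b 0) (fun i => b i.succ) := by
        funext x
        rcases x with x | x <;> simp
      rw [hfun] at hj
      exact hj

/-- Assuming Kollár's conjecture, for every point `x ∈ ℙ¹(ℂ)` the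
valuation ring `𝒪_x = {f ∈ ℂ(z) : v_x(f) ≥ 0}` is not Diophantine over `ℂ(z)`; in
particular `𝒪_∞` is not Diophantine over `ℂ(z)`. -/
theorem valuation_rings_not_diophantine (hK : KollarConjecture) :
    (∀ a : ℂ, ¬ IsDiophantine1 {f : RatFunc ℂ | 0 ≤ ordAt a f}) ∧
    ¬ IsDiophantine1 {f : RatFunc ℂ | 0 ≤ ordAtInfty f} := by
  constructor
  · intro a hdio
    have hall : ∀ n : ℕ, ContainsZariskiOpen {f : RatFunc ℂ | 0 ≤ ordAt a f} n := by
      intro n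
      refine ⟨1, fun _ => 1, ⟨fun _ => 0, 0, by simp⟩, fun c _ => ?_⟩
      show (0 : ℤ) ≤ ordAt a _
      unfold ordAt
      rw [RatFunc.num_algebraMap, RatFunc.denom_algebraMap]
      have h1 : Polynomial.rootMultiplicity a (1 : Polynomial ℂ) = 0 := by
        rw [← Polynomial.C_1, Polynomial.rootMultiplicity_C]
      rw [h1]
      simp
    have hfin := hK _ hdio (Set.Infinite.mono (fun n _ => hall n) Set.infinite_univ)
    set φ : ℂ → RatFunc ℂ := fun c =>
      algebraMap (Polynomial ℂ) (RatFunc ℂ) (Polynomial.C c) *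
        (algebraMap (Polynomial ℂ) (RatFunc ℂ) (Polynomial.X - Polynomial.C a))⁻¹ with hφ
    have hXa : (Polynomial.X - Polynomial.C a : Polynomial ℂ) ≠ 0 := Polynomial.X_sub_C_ne_zero a
    have hv : algebraMap (Polynomial ℂ) (RatFunc ℂ) (Polynomial.X - Polynomial.C a) ≠ 0 :=
      RatFunc.algebraMap_ne_zero hXa
    have hinj : Function.Injective φ := by
      intro c c' h
      simp only [hφ] at h
      have h2 := mul_right_cancel₀ (inv_ne_zero hv) h
      exact Polynomial.C_injective (RatFunc.algebraMap_injective ℂ h2)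
    have hsub : φ '' {(0:ℂ)}ᶜ ⊆ {f : RatFunc ℂ | 0 ≤ ordAt a f}ᶜ := by
      rintro _ ⟨c, hc, rfl⟩
      simp only [Set.mem_compl_iff, Set.mem_setOf_eq, not_le]
      have hc0 : (Polynomial.C c : Polynomial ℂ) ≠ 0 := by
        simpa using (Set.mem_compl_singleton_iff.mp hc)
      have hu : algebraMap (Polynomial ℂ) (RatFunc ℂ) (Polynomial.C c) ≠ 0 :=
        RatFunc.algebraMap_ne_zero hc0
      have h1 : ordAt a (algebraMap (Polynomial ℂ) (RatFunc ℂ) (Polynomial.C c)) = 0 := by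
        unfold ordAt
        rw [RatFunc.num_algebraMap, RatFunc.denom_algebraMap, Polynomial.rootMultiplicity_C]
        simp
      have h2 : ordAt a (algebraMap (Polynomial ℂ) (RatFunc ℂ)
          (Polynomial.X - Polynomial.C a)) = 1 := by
        unfold ordAt
        rw [RatFunc.num_algebraMap, RatFunc.denom_algebraMap,
          Polynomial.rootMultiplicity_X_sub_C_self]
        simp
      show ordAt a (φ c) < 0
      rw [hφ]
      simp only
      rw [aux_ordAt_mul a hu (inv_ne_zero hv), aux_ordAt_inv a hv, h1, h2]
      norm_num
    exact ((Set.finite_singleton (0:ℂ)).infinite_compl.image hinj.injOn) (hfin.subset hsub)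
  · intro hdio
    have hD := aux_dioph_comb hdio
    have hall : ∀ n : ℕ,
        ContainsZariskiOpen {f : RatFunc ℂ | ∃ g, f * f * g = f ∧
          g ∈ {f : RatFunc ℂ | 0 ≤ ordAtInfty f}} n := by
      intro n
      refine ⟨1, fun _ => 1, ⟨fun _ => 0, 0, by simp⟩, fun c _ => ?_⟩
      set p : Polynomial ℂ := ∑ i : Fin (n + 1), Polynomial.C (c i) * Polynomial.X ^ (i : ℕ)
        with hp
      by_cases h0 : algebraMap (Polynomial ℂ) (RatFunc ℂ) p = 0
      · refine ⟨0, by rw [h0]; ring, ?_⟩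
        show (0:ℤ) ≤ ordAtInfty 0
        rw [aux_ordAtInfty_eq, RatFunc.intDegree_zero]
        norm_num
      · refine ⟨(algebraMap (Polynomial ℂ) (RatFunc ℂ) p)⁻¹, ?_, ?_⟩
        · field_simp
        · show (0:ℤ) ≤ ordAtInfty _
          rw [aux_ordAtInfty_eq, aux_intDegree_inv h0, RatFunc.intDegree_polynomial]
          simp
    have hfin := hK _ hD (Set.Infinite.mono (fun n _ => hall n) Set.infinite_univ)
    set ψ : ℂ → RatFunc ℂ := fun c =>
      algebraMap (Polynomial ℂ) (RatFunc ℂ) (Polynomial.C c) *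
        (algebraMap (Polynomial ℂ) (RatFunc ℂ) Polynomial.X)⁻¹ with hψ
    have hX : algebraMap (Polynomial ℂ) (RatFunc ℂ) Polynomial.X ≠ 0 :=
      RatFunc.algebraMap_ne_zero Polynomial.X_ne_zero
    have hinj : Function.Injective ψ := by
      intro c c' h
      simp only [hψ] at h
      have h2 := mul_right_cancel₀ (inv_ne_zero hX) h
      exact Polynomial.C_injective (RatFunc.algebraMap_injective ℂ h2)
    have hsub : ψ '' {(0:ℂ)}ᶜ ⊆
        {f : RatFunc ℂ | ∃ g, f * f * g = f ∧ g ∈ {f : RatFunc ℂ | 0 ≤ ordAtInfty f}}ᶜ := by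
      rintro _ ⟨c, hc, rfl⟩
      simp only [Set.mem_compl_iff, Set.mem_setOf_eq, not_exists, not_and]
      intro g hg1
      have hc0 : (Polynomial.C c : Polynomial ℂ) ≠ 0 := by
        simpa using (Set.mem_compl_singleton_iff.mp hc)
      have hu : algebraMap (Polynomial ℂ) (RatFunc ℂ) (Polynomial.C c) ≠ 0 :=
        RatFunc.algebraMap_ne_zero hc0
      have hψ0 : ψ c ≠ 0 := mul_ne_zero hu (inv_ne_zero hX)
      have h1 : ψ c * (ψ c * g) = ψ c * 1 := by rw [mul_one]; linear_combination hg1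
      have h2 : ψ c * g = 1 := mul_left_cancel₀ hψ0 h1
      have h3 : g = (ψ c)⁻¹ := eq_inv_of_mul_eq_one_right h2
      have h4 : (ψ c).intDegree = -1 := by
        rw [hψ]
        simp only
        rw [RatFunc.intDegree_mul hu (inv_ne_zero hX), aux_intDegree_inv hX,
          RatFunc.intDegree_polynomial, RatFunc.intDegree_polynomial,
          Polynomial.natDegree_C, Polynomial.natDegree_X]
        norm_num
      show ¬ (0:ℤ) ≤ ordAtInfty g
      rw [h3, aux_ordAtInfty_eq, aux_intDegree_inv hψ0, h4]
      norm_num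
    exact ((Set.finite_singleton (0:ℂ)).infinite_compl.image hinj.injOn) (hfin.subset hsub)
end

section
/- Assume Kollár's conjecture: every set D ⊆ ℂ(z) that is Diophantine over ℂ(z) and contains, for infinitely many integers n ≥ 0, a nonempty Zariski open subset of ℂ[z]_n = ℂ^{n+1} (the polynomials of degree at most n, identified with ℂ^{n+1} via coefficients), has finite complement ℂ(z) − D. Let ℓ ∈ {1,2,3,…} ∪ {∞} and let S ⊆ ℙ¹(ℂ) be a finite set. Then the set of Campana points 𝒞_{S,ℓ} = {f ∈ ℂ(z) : for all α ∈ ℙ¹(ℂ) − S, if v_α(f) ≤ −1 then v_α(f) ≤ −ℓ} is not Diophantine over ℂ(z), unless ℓ = 1 (in which case 𝒞_{S,ℓ} = ℂ(z)) or ℓ = ∞ and S = ∅ (in which case 𝒞_{∅,∞} = ℂ). -/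
/-- The order of vanishing `v_α(f)` of `f = p/q ∈ ℂ(z)` (in lowest terms) at a point
`α ∈ ℙ¹(ℂ)`, where `ℙ¹(ℂ)` is modelled as `Option ℂ` with `none` the point `∞`:
at `some a` it is the root multiplicity of `a` in `p` minus that in `q`, and at `∞` it is
`deg q − deg p`. -/
noncomputable def ordP1 : Option ℂ → RatFunc ℂ → ℤ
  | some a, f => (f.num.rootMultiplicity a : ℤ) - (f.denom.rootMultiplicity a : ℤ)
  | none, f => (f.denom.natDegree : ℤ) - (f.num.natDegree : ℤ)

/-- The set of Campana points `𝒞_{S,ℓ} ⊆ ℂ(z)`: rational functions `f` such that for all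
`α ∈ ℙ¹(ℂ) − S`, if `v_α(f) ≤ −1` then `v_α(f) ≤ −ℓ` (for `ℓ = ∞` the latter condition is
never satisfied). -/
def CampanaSet (S : Set (Option ℂ)) (ℓ : ℕ∞) : Set (RatFunc ℂ) :=
  {f | ∀ α : Option ℂ, α ∉ S → ordP1 α f ≤ -1 →
    ∃ l : ℕ, ℓ = (l : ℕ∞) ∧ ordP1 α f ≤ -(l : ℤ)}


section Aux

open Polynomial

/-! ### Order-of-vanishing lemmas -/

lemma ord_some_div {p q : Polynomial ℂ} (hq : q ≠ 0) {β : ℂ} (hβ : ¬ q.IsRoot β) :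
    0 ≤ ordP1 (some β) (algebraMap (Polynomial ℂ) (RatFunc ℂ) p / algebraMap _ _ q) := by
  have hdvd : (algebraMap (Polynomial ℂ) (RatFunc ℂ) p / algebraMap _ _ q).denom ∣ q :=
    (RatFunc.denom_dvd hq).mpr ⟨p, rfl⟩
  have h2 : ¬ (algebraMap (Polynomial ℂ) (RatFunc ℂ) p / algebraMap _ _ q).denom.IsRoot β :=
    fun h => hβ (h.dvd hdvd)
  simp [ordP1, Polynomial.rootMultiplicity_eq_zero h2]

lemma cross_mul {p q : Polynomial ℂ} (hq : q ≠ 0)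
    {f : RatFunc ℂ} (hf : f = algebraMap (Polynomial ℂ) (RatFunc ℂ) p / algebraMap _ _ q) :
    f.num * q = f.denom * p := by
  have h1 : algebraMap (Polynomial ℂ) (RatFunc ℂ) f.num / algebraMap _ _ f.denom
      = algebraMap (Polynomial ℂ) (RatFunc ℂ) p / algebraMap _ _ q := by
    rw [RatFunc.num_div_denom, hf]
  have hq' : (algebraMap (Polynomial ℂ) (RatFunc ℂ)) q ≠ 0 := RatFunc.algebraMap_ne_zero hq
  have hd' : (algebraMap (Polynomial ℂ) (RatFunc ℂ)) f.denom ≠ 0 :=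
    RatFunc.algebraMap_ne_zero f.denom_ne_zero
  have h3 := (div_eq_div_iff hd' hq').mp h1
  apply RatFunc.algebraMap_injective ℂ
  rw [map_mul, map_mul, h3]; ring

lemma ord_none_div {p q : Polynomial ℂ} (hq : q ≠ 0) (hdeg : p.natDegree ≤ q.natDegree) :
    0 ≤ ordP1 none (algebraMap (Polynomial ℂ) (RatFunc ℂ) p / algebraMap _ _ q) := by
  set f := algebraMap (Polynomial ℂ) (RatFunc ℂ) p / algebraMap _ _ q with hf
  by_cases h0 : f = 0
  · simp [ordP1, h0]
  · have hp : p ≠ 0 := by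
      rintro rfl; simp [hf] at h0
    have hnum : f.num ≠ 0 := RatFunc.num_ne_zero h0
    have hcm := cross_mul hq hf
    have hdeg2 : f.num.natDegree + q.natDegree = f.denom.natDegree + p.natDegree := by
      rw [← Polynomial.natDegree_mul hnum hq, hcm,
        Polynomial.natDegree_mul f.denom_ne_zero hp]
    simp only [ordP1]
    omega

lemma ord_inv_X_sub_C (b : ℂ) :
    ordP1 (some b) ((algebraMap (Polynomial ℂ) (RatFunc ℂ) (X - C b))⁻¹) = -1 := by
  have hq : (X - C b : Polynomial ℂ) ≠ 0 := Polynomial.X_sub_C_ne_zero b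
  have hf : (algebraMap (Polynomial ℂ) (RatFunc ℂ) (X - C b))⁻¹
      = algebraMap (Polynomial ℂ) (RatFunc ℂ) 1 / algebraMap _ _ (X - C b) := by
    rw [map_one, one_div]
  set f := (algebraMap (Polynomial ℂ) (RatFunc ℂ) (X - C b))⁻¹ with hfdef
  have hcm := cross_mul hq hf
  rw [mul_one] at hcm
  have hdvd : f.denom ∣ (X - C b) := (RatFunc.denom_dvd hq).mpr ⟨1, hf⟩
  have hnum_unit : IsUnit f.num := by
    have h2 : f.num * (X - C b) ∣ 1 * (X - C b) := by
      rw [hcm, one_mul]; exact hdvd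
    exact isUnit_of_dvd_one ((mul_dvd_mul_iff_right hq).mp h2)
  have hnum_mult : f.num.rootMultiplicity b = 0 := by
    obtain ⟨u, hu⟩ := Polynomial.isUnit_iff.mp hnum_unit
    rw [← hu.2, Polynomial.rootMultiplicity_eq_zero]
    simp only [Polynomial.IsRoot, Polynomial.eval_C]
    exact hu.1.ne_zero
  have hden_mult : f.denom.rootMultiplicity b = 1 := by
    rw [← hcm, Polynomial.rootMultiplicity_mul (by rw [hcm]; exact f.denom_ne_zero),
      hnum_mult, Polynomial.rootMultiplicity_X_sub_C_self]
  simp [ordP1, hnum_mult, hden_mult]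

lemma ord_some_algebraMap (p : Polynomial ℂ) (β : ℂ) :
    0 ≤ ordP1 (some β) (algebraMap (Polynomial ℂ) (RatFunc ℂ) p) := by
  simp [ordP1, RatFunc.num_algebraMap, RatFunc.denom_algebraMap,
    Polynomial.rootMultiplicity_eq_zero
      (by simp [Polynomial.IsRoot] : ¬ (1 : Polynomial ℂ).IsRoot β)]

lemma ord_none_algebraMap (p : Polynomial ℂ) :
    ordP1 none (algebraMap (Polynomial ℂ) (RatFunc ℂ) p) = -(p.natDegree : ℤ) := by
  simp [ordP1, RatFunc.num_algebraMap, RatFunc.denom_algebraMap]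

/-! ### The Möbius involution `z ↦ a + 1/(z - a)` -/

noncomputable def gMob (a : ℂ) : RatFunc ℂ :=
  algebraMap (Polynomial ℂ) (RatFunc ℂ) (C a) +
    (algebraMap (Polynomial ℂ) (RatFunc ℂ) (X - C a))⁻¹

noncomputable def Qpoly (a : ℂ) (p : Polynomial ℂ) : Polynomial ℂ :=
  ∑ i ∈ Finset.range (p.natDegree + 1),
    C (p.coeff i) * (C a * (X - C a) + 1) ^ i * (X - C a) ^ (p.natDegree - i)

lemma key_identity (a : ℂ) (p : Polynomial ℂ) :
    Polynomial.aeval (gMob a) p *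
      algebraMap (Polynomial ℂ) (RatFunc ℂ) ((X - C a) ^ p.natDegree) =
    algebraMap (Polynomial ℂ) (RatFunc ℂ) (Qpoly a p) := by
  set u := algebraMap (Polynomial ℂ) (RatFunc ℂ) (X - C a) with hu_def
  have hu : u ≠ 0 := RatFunc.algebraMap_ne_zero (Polynomial.X_sub_C_ne_zero a)
  have hg : gMob a * u = algebraMap (Polynomial ℂ) (RatFunc ℂ) (C a * (X - C a) + 1) := by
    rw [gMob, add_mul, inv_mul_cancel₀ hu, map_add, map_mul, map_one]
  set n := p.natDegree with hn
  conv_lhs => rw [p.as_sum_range' (n + 1) (by omega)]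
  rw [map_sum, Finset.sum_mul, Qpoly, map_sum]
  apply Finset.sum_congr rfl
  intro i hi
  have hi' : i ≤ n := Nat.lt_succ_iff.mp (Finset.mem_range.mp hi)
  rw [Polynomial.aeval_monomial, map_pow]
  have hpow : (gMob a) ^ i * u ^ n = (gMob a * u) ^ i * u ^ (n - i) := by
    rw [mul_pow, mul_assoc, ← pow_add]
    congr 2
    omega
  rw [map_mul, map_mul, map_pow, map_pow, mul_assoc, hpow, hg, ← mul_assoc, ← hu_def, ← hn,
    IsScalarTower.algebraMap_apply ℂ (Polynomial ℂ) (RatFunc ℂ), Polynomial.algebraMap_eq]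

lemma Qpoly_eval_a (a : ℂ) (p : Polynomial ℂ) : (Qpoly a p).eval a = p.leadingCoeff := by
  rw [Qpoly, Polynomial.eval_finset_sum]
  rw [Finset.sum_eq_single p.natDegree]
  · simp only [Polynomial.eval_mul, Polynomial.eval_pow, Polynomial.eval_add,
      Polynomial.eval_one, Polynomial.eval_sub, Polynomial.eval_C, Polynomial.eval_X,
      Nat.sub_self, pow_zero, mul_one, sub_self, mul_zero, zero_add, one_pow]
    rfl
  · intro i hi hne
    have h2 : p.natDegree - i ≠ 0 := by
      simp only [Finset.mem_range] at hi; omega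
    simp [zero_pow h2]
  · intro h
    exact absurd (Finset.self_mem_range_succ p.natDegree) h

lemma aeval_gMob_injective (a : ℂ) :
    Function.Injective (Polynomial.aeval (gMob a) : Polynomial ℂ →ₐ[ℂ] RatFunc ℂ) := by
  rw [injective_iff_map_eq_zero]
  intro p hp
  by_contra hp0
  have h := key_identity a p
  rw [hp, zero_mul] at h
  have hQ : Qpoly a p = 0 := RatFunc.algebraMap_injective ℂ (by rw [← h, map_zero])
  have h2 := Qpoly_eval_a a p
  rw [hQ, Polynomial.eval_zero] at h2
  exact hp0 (Polynomial.leadingCoeff_eq_zero.mp h2.symm)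

lemma Qpoly_natDegree_le (a : ℂ) (p : Polynomial ℂ) :
    (Qpoly a p).natDegree ≤ p.natDegree := by
  apply Polynomial.natDegree_sum_le_of_forall_le
  intro i hi
  have hi' : i ≤ p.natDegree := Nat.lt_succ_iff.mp (Finset.mem_range.mp hi)
  have h1 : (C a * (X - C a) + 1 : Polynomial ℂ).natDegree ≤ 1 := by
    apply le_trans (Polynomial.natDegree_add_le _ _)
    simp only [Polynomial.natDegree_one, max_le_iff]
    refine ⟨le_trans Polynomial.natDegree_mul_le ?_, by omega⟩
    simp [Polynomial.natDegree_X_sub_C]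
  have h2 : ((C a * (X - C a) + 1 : Polynomial ℂ) ^ i).natDegree ≤ i :=
    le_trans Polynomial.natDegree_pow_le (by nlinarith)
  have h3 : ((X - C a : Polynomial ℂ) ^ (p.natDegree - i)).natDegree ≤ p.natDegree - i :=
    le_trans Polynomial.natDegree_pow_le (by simp [Polynomial.natDegree_X_sub_C])
  have h4 := Polynomial.natDegree_mul_le
    (p := C (p.coeff i) * (C a * (X - C a) + 1) ^ i)
    (q := (X - C a : Polynomial ℂ) ^ (p.natDegree - i))
  have h5 := Polynomial.natDegree_mul_le (p := C (p.coeff i))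
    (q := (C a * (X - C a) + 1 : Polynomial ℂ) ^ i)
  simp only [Polynomial.natDegree_C, zero_add] at h5
  omega

noncomputable def sigMob (a : ℂ) : RatFunc ℂ →ₐ[ℂ] RatFunc ℂ :=
  RatFunc.liftAlgHom (Polynomial.aeval (gMob a))
    (nonZeroDivisors_le_comap_nonZeroDivisors_of_injective _ (aeval_gMob_injective a))

lemma sigMob_algebraMap (a : ℂ) (p : Polynomial ℂ) :
    sigMob a (algebraMap (Polynomial ℂ) (RatFunc ℂ) p) = Polynomial.aeval (gMob a) p := by
  have := RatFunc.liftAlgHom_apply_div (Polynomial.aeval (gMob a))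
    (nonZeroDivisors_le_comap_nonZeroDivisors_of_injective _ (aeval_gMob_injective a)) p 1
  simpa [sigMob] using this

lemma sigMob_sigMob_algebraMap (a : ℂ) (p : Polynomial ℂ) :
    sigMob a (sigMob a (algebraMap (Polynomial ℂ) (RatFunc ℂ) p))
      = algebraMap (Polynomial ℂ) (RatFunc ℂ) p := by
  have hu : (algebraMap (Polynomial ℂ) (RatFunc ℂ)) (X - C a) ≠ 0 :=
    RatFunc.algebraMap_ne_zero (Polynomial.X_sub_C_ne_zero a)
  have hXX : sigMob a (sigMob a (algebraMap (Polynomial ℂ) (RatFunc ℂ) X))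
      = algebraMap (Polynomial ℂ) (RatFunc ℂ) X := by
    have hCa : ((algebraMap ℂ (RatFunc ℂ)) a) = algebraMap (Polynomial ℂ) (RatFunc ℂ) (C a) := by
      rw [IsScalarTower.algebraMap_apply ℂ (Polynomial ℂ) (RatFunc ℂ), Polynomial.algebraMap_eq]
    rw [sigMob_algebraMap, Polynomial.aeval_X, gMob]
    simp only [map_add, map_inv₀, map_sub, sigMob_algebraMap, Polynomial.aeval_X,
      Polynomial.aeval_C, hCa, gMob]
    rw [add_sub_cancel_left, inv_inv]; ring
  have h2 : ((sigMob a).comp (sigMob a)).comp (IsScalarTower.toAlgHom ℂ (Polynomial ℂ) (RatFunc ℂ))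
      = IsScalarTower.toAlgHom ℂ (Polynomial ℂ) (RatFunc ℂ) := by
    apply Polynomial.algHom_ext
    simpa using hXX
  exact congrFun (congrArg (fun h => h.toFun) h2) p

lemma sigMob_invol (a : ℂ) (f : RatFunc ℂ) : sigMob a (sigMob a f) = f := by
  conv_lhs => rw [← RatFunc.num_div_denom f]
  rw [map_div₀, map_div₀, sigMob_sigMob_algebraMap, sigMob_sigMob_algebraMap,
    RatFunc.num_div_denom]

/-! ### Diophantine sets are preserved by involutive endomorphisms -/

lemma dioph_transfer {R : Type*} [Field R] (σ : R →+* R) (hσ : ∀ x, σ (σ x) = x)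
    (X : Set R) (h : IsDiophantine1 X) : IsDiophantine1 {f | σ f ∈ X} := by
  obtain ⟨m, r, F, hF⟩ := h
  have hinj : Function.Injective σ := fun x y hxy => by
    have := congrArg σ hxy; rwa [hσ, hσ] at this
  have key : ∀ (v : Fin 1 ⊕ Fin m → R) (p : MvPolynomial (Fin 1 ⊕ Fin m) R),
      MvPolynomial.eval (σ ∘ v) (MvPolynomial.map σ p) = σ (MvPolynomial.eval v p) := by
    intro v p
    rw [MvPolynomial.eval_map]
    have := MvPolynomial.eval₂_comp_left σ (RingHom.id R) v p
    rw [RingHom.comp_id] at this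
    rw [← this]
    rfl
  refine ⟨m, r, fun j => MvPolynomial.map σ (F j), fun a => ?_⟩
  rw [Set.mem_setOf_eq, hF]
  constructor
  · rintro ⟨b, hb⟩
    refine ⟨σ ∘ b, fun j => ?_⟩
    have hv : Sum.elim (fun _ : Fin 1 => a) (σ ∘ b) = σ ∘ Sum.elim (fun _ => σ a) b := by
      funext x; cases x <;> simp [hσ]
    rw [hv, key, hb j, map_zero]
  · rintro ⟨b, hb⟩
    refine ⟨σ ∘ b, fun j => ?_⟩
    apply hinj
    have hv : σ ∘ Sum.elim (fun _ : Fin 1 => σ a) (σ ∘ b) = Sum.elim (fun _ => a) b := by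
      funext x; cases x <;> simp [hσ]
    rw [← key, hv, hb j, map_zero]

lemma compl_infinite {T : Set (RatFunc ℂ)} {B : Set ℂ} (hB : B.Infinite)
    (g : ℂ → RatFunc ℂ) (hg : Function.Injective g)
    (hmem : ∀ b ∈ B, g b ∉ T) : Tᶜ.Infinite := by
  have : Infinite ↥B := hB.to_subtype
  exact Set.infinite_of_injective_forall_mem
    (f := fun b : ↥B => g b)
    (fun x y h => Subtype.ext (hg h))
    (fun b => hmem b b.2)

end Aux

/-- Assuming Kollár's conjecture, for `ℓ ∈ {1,2,…} ∪ {∞}` and `S ⊆ ℙ¹(ℂ)`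
finite, the set of Campana points `𝒞_{S,ℓ}` is not Diophantine over `ℂ(z)`, unless `ℓ = 1`
or (`ℓ = ∞` and `S = ∅`). -/
theorem campana_points_not_diophantine (hK : KollarConjecture)
    (ℓ : ℕ∞) (hℓ : 1 ≤ ℓ) (S : Set (Option ℂ)) (hS : S.Finite)
    (h1 : ℓ ≠ 1) (h2 : ¬ (ℓ = ⊤ ∧ S = ∅)) :
    ¬ IsDiophantine1 (CampanaSet S ℓ) := by
  intro hdio
  classical
  -- the set of finite points outside S is infinite
  have hBfin : {b : ℂ | (some b : Option ℂ) ∈ S}.Finite := by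
    have : {b : ℂ | (some b : Option ℂ) ∈ S} = some ⁻¹' S := rfl
    rw [this]
    exact hS.preimage (Option.some_injective ℂ).injOn
  have hB : {b : ℂ | (some b : Option ℂ) ∉ S}.Infinite := hBfin.infinite_compl
  -- basic non-membership of 1/(z-b) for b ∉ S
  have notInC : ∀ b : ℂ, (some b : Option ℂ) ∉ S →
      (algebraMap (Polynomial ℂ) (RatFunc ℂ) (Polynomial.X - Polynomial.C b))⁻¹ ∉
        CampanaSet S ℓ := by
    intro b hb hmem
    obtain ⟨l, hl, hle⟩ := hmem (some b) hb (by rw [ord_inv_X_sub_C])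
    rw [ord_inv_X_sub_C] at hle
    have hl1 : l ≤ 1 := by omega
    have hl1' : 1 ≤ l := by
      rw [hl] at hℓ
      exact_mod_cast hℓ
    apply h1
    rw [hl]
    have : l = 1 := le_antisymm hl1 hl1'
    rw [this, Nat.cast_one]
  have hinj1 : Function.Injective
      (fun b : ℂ => (algebraMap (Polynomial ℂ) (RatFunc ℂ) (Polynomial.X - Polynomial.C b))⁻¹) := by
    intro b1 b2 h
    have h2 := inv_injective h
    have h3 := RatFunc.algebraMap_injective ℂ h2
    have h4 := congrArg (fun p => Polynomial.eval b1 p) h3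
    simpa [sub_eq_zero, eq_comm] using h4
  by_cases hT : ℓ = ⊤
  · -- infinite multiplicity case: S ≠ ∅
    subst hT
    have hSne : S.Nonempty := by
      rcases S.eq_empty_or_nonempty with h | h
      · exact absurd ⟨rfl, h⟩ h2
      · exact h
    obtain ⟨α₀, hα₀⟩ := hSne
    cases α₀ with
    | none =>
      -- ∞ ∈ S : all polynomials are Campana points
      have polyMem : ∀ p : Polynomial ℂ,
          algebraMap (Polynomial ℂ) (RatFunc ℂ) p ∈ CampanaSet S ⊤ := by
        intro p α hα hneg
        exfalso
        cases α with
        | none => exact hα hα₀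
        | some β =>
          have := ord_some_algebraMap p β
          omega
      have hCZO : ∀ n : ℕ, ContainsZariskiOpen (CampanaSet S ⊤) n := by
        intro n
        exact ⟨1, fun _ => 1, ⟨fun _ => 0, ⟨0, by simp⟩⟩, fun c _ => polyMem _⟩
      have hfin := hK _ hdio (by
        have : {n : ℕ | ContainsZariskiOpen (CampanaSet S ⊤) n} = Set.univ :=
          Set.eq_univ_of_forall hCZO
        rw [this]
        exact Set.infinite_univ)
      have hinf : (CampanaSet S ⊤)ᶜ.Infinite :=
        compl_infinite hB _ hinj1 (fun b hb => notInC b hb)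
      exact hinf hfin
    | some a =>
      -- finite point a ∈ S : conjugate by the Möbius involution at a
      set σ := (sigMob a).toRingHom with hσdef
      have hσinvol : ∀ x, σ (σ x) = x := sigMob_invol a
      set D := {f : RatFunc ℂ | σ f ∈ CampanaSet S ⊤} with hD
      have hDdio : IsDiophantine1 D := dioph_transfer σ hσinvol _ hdio
      have hpow_ne : ∀ p : Polynomial ℂ,
          ((Polynomial.X - Polynomial.C a) ^ p.natDegree : Polynomial ℂ) ≠ 0 :=
        fun p => pow_ne_zero _ (Polynomial.X_sub_C_ne_zero a)
      have hdiv : ∀ p : Polynomial ℂ,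
          sigMob a (algebraMap (Polynomial ℂ) (RatFunc ℂ) p) =
            algebraMap (Polynomial ℂ) (RatFunc ℂ) (Qpoly a p) /
              algebraMap _ _ ((Polynomial.X - Polynomial.C a) ^ p.natDegree) := by
        intro p
        rw [sigMob_algebraMap, eq_div_iff (RatFunc.algebraMap_ne_zero (hpow_ne p))]
        exact key_identity a p
      have polyMem : ∀ p : Polynomial ℂ,
          sigMob a (algebraMap (Polynomial ℂ) (RatFunc ℂ) p) ∈ CampanaSet S ⊤ := by
        intro p α hα hneg
        exfalso
        rw [hdiv p] at hneg
        cases α with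
        | none =>
          have hd : (Qpoly a p).natDegree ≤
              ((Polynomial.X - Polynomial.C a) ^ p.natDegree : Polynomial ℂ).natDegree := by
            rw [Polynomial.natDegree_pow, Polynomial.natDegree_X_sub_C, mul_one]
            exact Qpoly_natDegree_le a p
          have := ord_none_div (p := Qpoly a p) (hpow_ne p) hd
          omega
        | some β =>
          have hβa : β ≠ a := fun h => hα (h ▸ hα₀)
          have hroot : ¬ ((Polynomial.X - Polynomial.C a) ^ p.natDegree :
              Polynomial ℂ).IsRoot β := by
            simp only [Polynomial.IsRoot, Polynomial.eval_pow, Polynomial.eval_sub,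
              Polynomial.eval_X, Polynomial.eval_C]
            exact pow_ne_zero _ (sub_ne_zero.mpr hβa)
          have := ord_some_div (p := Qpoly a p) (hpow_ne p) hroot
          omega
      have hCZO : ∀ n : ℕ, ContainsZariskiOpen D n := by
        intro n
        refine ⟨1, fun _ => 1, ⟨fun _ => 0, ⟨0, by simp⟩⟩, fun c _ => ?_⟩
        exact polyMem _
      have hfin := hK _ hDdio (by
        have : {n : ℕ | ContainsZariskiOpen D n} = Set.univ := Set.eq_univ_of_forall hCZO
        rw [this]
        exact Set.infinite_univ)
      have hσinj : Function.Injective ⇑(sigMob a) := fun x y h => by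
        have := congrArg (sigMob a) h
        rwa [sigMob_invol, sigMob_invol] at this
      have hinf : Dᶜ.Infinite := by
        apply compl_infinite hB
          (fun b => sigMob a ((algebraMap (Polynomial ℂ) (RatFunc ℂ)
            (Polynomial.X - Polynomial.C b))⁻¹))
          (fun x y h => hinj1 (hσinj h))
        intro b hb hmemD
        apply notInC b hb
        have : σ (sigMob a ((algebraMap (Polynomial ℂ) (RatFunc ℂ)
            (Polynomial.X - Polynomial.C b))⁻¹)) ∈ CampanaSet S ⊤ := hmemD
        rwa [hσdef, AlgHom.toRingHom_eq_coe, RingHom.coe_coe, sigMob_invol] at this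
      exact hinf hfin
  · -- finite multiplicity ℓ = l₀ ≥ 2
    obtain ⟨l₀, rfl⟩ := WithTop.ne_top_iff_exists.mp hT
    have polyMemDeg : ∀ p : Polynomial ℂ, l₀ ≤ p.natDegree →
        algebraMap (Polynomial ℂ) (RatFunc ℂ) p ∈ CampanaSet S (l₀ : ℕ∞) := by
      intro p hdeg α hα hneg
      cases α with
      | some β =>
        exfalso
        have := ord_some_algebraMap p β
        omega
      | none =>
        refine ⟨l₀, rfl, ?_⟩
        rw [ord_none_algebraMap]
        have : (l₀ : ℤ) ≤ (p.natDegree : ℤ) := by exact_mod_cast hdeg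
        omega
    have hCZO : ∀ n : ℕ, l₀ ≤ n → ContainsZariskiOpen (CampanaSet S (l₀ : ℕ∞)) n := by
      intro n hn
      refine ⟨1, fun _ => MvPolynomial.X (Fin.last n),
        ⟨fun i => if i = Fin.last n then 1 else 0, 0, by simp⟩, ?_⟩
      intro c hc
      have hcn : c (Fin.last n) ≠ 0 := by
        obtain ⟨j, hj⟩ := hc
        simpa [MvPolynomial.eval_X] using hj
      set P := ∑ i : Fin (n + 1), Polynomial.C (c i) * Polynomial.X ^ (i : ℕ) with hP
      have hco : P.coeff n = c (Fin.last n) := by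
        rw [hP, Polynomial.finset_sum_coeff, Finset.sum_eq_single (Fin.last n)]
        · simp [Polynomial.coeff_C_mul, Polynomial.coeff_X_pow, Fin.val_last]
        · intro i _ hne
          have hi : ¬ (n = (i : ℕ)) := fun h => hne (by
            apply Fin.ext
            simp [← h, Fin.val_last])
          simp [Polynomial.coeff_C_mul, Polynomial.coeff_X_pow, hi]
        · simp
      have hdegle : P.natDegree ≤ n := by
        apply Polynomial.natDegree_sum_le_of_forall_le
        intro i _
        exact le_trans (Polynomial.natDegree_C_mul_X_pow_le _ _) (by omega)
      have hdegeq : P.natDegree = n :=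
        le_antisymm hdegle (Polynomial.le_natDegree_of_ne_zero (by rw [hco]; exact hcn))
      exact polyMemDeg P (by omega)
    have hfin := hK _ hdio (by
      apply Set.Infinite.mono (s := Set.Ici l₀) (fun n hn => hCZO n hn)
      exact Set.Ici_infinite l₀)
    have hinf : (CampanaSet S (l₀ : ℕ∞))ᶜ.Infinite :=
      compl_infinite hB _ hinj1 (fun b hb => notInC b hb)
    exact hinf hfin
end

section
/- Let p be a prime and let k be an algebraically closed field of characteristic p. Then there is a set D ⊆ k(z) that is Diophantine over k(z), such that k(z) − D is infinite and, for every n ≥ 1, D contains a nonempty Zariski open subset of k[z]_n = k^{n+1} (the polynomials of degree at most n, identified with k^{n+1} via coefficients). In fact, D = k(z) − k(z^p), the complement of the subfield of rational functions in z^p, has these properties. -/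
/-! Since `k` is perfect, `k(z^p)` is the subfield `K^p` of `p`-th powers of `K = k(z)`, and
`[K : K^p] = p` because `z` has minimal polynomial `T^p - z^p` over `K^p` and generates `K`.
Any `a ∉ K^p` likewise has degree `p`, so `1, a, …, a^(p-1)` is a `K^p`-basis of `K`; hence
`a ∉ K^p` iff `z = ∑ bᵢ^p aⁱ` is solvable, since for `a ∈ K^p` the right side lies in `K^p` but
`z` does not. A polynomial which is a `p`-th power in `K` is one in `k[z]` (integral closedness),
so its coefficient of `z` vanishes: this gives the Zariski open sets. The complement of `D`
contains `k`, hence is infinite. -/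

open Polynomial Module IntermediateField

theorem Polynomial.coeff_pow_char_eq_zero {R : Type*} [CommSemiring R] (p : ℕ) [ExpChar R p]
    (f : R[X]) {n : ℕ} (hn : ¬ p ∣ n) : (f ^ p).coeff n = 0 := by
  rw [← map_frobenius_expand, coeff_map, coeff_expand (expChar_pos R p), if_neg hn, map_zero]

theorem IsIntegrallyClosed.exists_pow_eq_of_pow_eq_algebraMap {R K : Type*} [CommRing R]
    [IsIntegrallyClosed R] [CommRing K] [Algebra R K] [IsFractionRing R K] {n : ℕ}
    (hn : 0 < n) {g : R} {e : K} (he : e ^ n = algebraMap R K g) : ∃ h : R, h ^ n = g := by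
  obtain ⟨h, rfl⟩ := exists_algebraMap_eq_of_isIntegral_pow hn (he ▸ isIntegral_algebraMap)
  exact ⟨h, IsFractionRing.injective R K (by rwa [map_pow])⟩

section FrobeniusFieldRange

variable {K : Type*} [Field K] (p : ℕ) [Fact p.Prime] [CharP K p]

theorem pow_mem_frobenius_fieldRange (x : K) : x ^ p ∈ (frobenius K p).fieldRange :=
  ⟨x, frobenius_def ..⟩

variable {p}

theorem minpoly_frobenius_fieldRange_of_notMem {a : K} (ha : a ∉ (frobenius K p).fieldRange) :
    minpoly (frobenius K p).fieldRange a =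
      X ^ p - C ⟨a ^ p, pow_mem_frobenius_fieldRange p a⟩ := by
  have hp : p.Prime := Fact.out
  refine (minpoly.eq_of_irreducible_of_monic ?_ ?_ (monic_X_pow_sub_C _ hp.ne_zero)).symm
  · refine X_pow_sub_C_irreducible_of_prime hp fun b hb => ha ?_
    have hba : frobenius K p b = frobenius K p a := by
      simpa [frobenius_def] using congrArg Subtype.val hb
    exact frobenius_inj K p hba ▸ b.2
  · simp only [map_sub, map_pow, aeval_X, aeval_C]
    exact sub_self _

theorem natDegree_minpoly_frobenius_fieldRange_of_notMem {a : K}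
    (ha : a ∉ (frobenius K p).fieldRange) :
    (minpoly (frobenius K p).fieldRange a).natDegree = p := by
  rw [minpoly_frobenius_fieldRange_of_notMem ha, natDegree_X_pow_sub_C]

theorem exists_sum_pow_mul_pow_eq_of_notMem {a : K}
    (hK : finrank (frobenius K p).fieldRange K = p) (ha : a ∉ (frobenius K p).fieldRange) (x : K) :
    ∃ b : Fin p → K, ∑ i, b i ^ p * a ^ (i : ℕ) = x := by
  have hli := linearIndependent_pow (K := (frobenius K p).fieldRange) a
  rw [natDegree_minpoly_frobenius_fieldRange_of_notMem ha] at hli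
  have : FiniteDimensional (frobenius K p).fieldRange K :=
    Module.finite_of_finrank_pos (by rw [hK]; exact (Fact.out : p.Prime).pos)
  have hspan := hli.span_eq_top_of_card_eq_finrank' (by simpa using hK.symm)
  obtain ⟨c, hc⟩ :=
    (Submodule.mem_span_range_iff_exists_fun _).mp (hspan ▸ Submodule.mem_top (x := x))
  choose b hb using fun i => (c i).2
  refine ⟨b, hc ▸ Finset.sum_congr rfl fun i _ => ?_⟩
  rw [← frobenius_def, hb, Algebra.smul_def]
  rfl

theorem sum_pow_mul_pow_mem_frobenius_fieldRange {a : K} (ha : a ∈ (frobenius K p).fieldRange)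
    (b : Fin p → K) :
    ∑ i, b i ^ p * a ^ (i : ℕ) ∈ (frobenius K p).fieldRange :=
  sum_mem fun _ _ => mul_mem (pow_mem_frobenius_fieldRange p _) (pow_mem ha _)

theorem notMem_frobenius_fieldRange_iff_exists_sum_eq {x : K}
    (hK : finrank (frobenius K p).fieldRange K = p) (hx : x ∉ (frobenius K p).fieldRange) {a : K} :
    a ∉ (frobenius K p).fieldRange ↔ ∃ b : Fin p → K, ∑ i, b i ^ p * a ^ (i : ℕ) = x :=
  ⟨fun ha => exists_sum_pow_mul_pow_eq_of_notMem hK ha x,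
    fun ⟨b, hb⟩ ha => hx (hb ▸ sum_pow_mul_pow_mem_frobenius_fieldRange ha b)⟩

theorem isDiophantine1_compl_frobenius_fieldRange {x : K}
    (hK : finrank (frobenius K p).fieldRange K = p) (hx : x ∉ (frobenius K p).fieldRange) :
    IsDiophantine1 {a : K | a ∉ (frobenius K p).fieldRange} := by
  refine ⟨p, 1, fun _ =>
    ∑ i : Fin p, MvPolynomial.X (.inr i) ^ p * MvPolynomial.X (.inl 0) ^ (i : ℕ) - MvPolynomial.C x,
    fun a => ?_⟩
  rw [Set.mem_ofPred_eq, notMem_frobenius_fieldRange_iff_exists_sum_eq hK hx]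
  simp [sub_eq_zero]

end FrobeniusFieldRange

namespace RatFunc

variable {k : Type*} [Field k]

theorem eq_top_of_algebraMap_mem_of_X_mem {S : Subfield (RatFunc k)}
    (hC : ∀ a, algebraMap k (RatFunc k) a ∈ S) (hX : RatFunc.X ∈ S) : S = ⊤ :=
  eq_top_iff.mpr fun f _ => by
    have hle : k⟮RatFunc.X⟯ ≤ S.toIntermediateField hC := adjoin_simple_le_iff.mpr hX
    rw [RatFunc.adjoin_X] at hle
    exact hle (mem_top (x := f))

variable (p : ℕ) [Fact p.Prime] [CharP k p]

theorem algebraMap_notMem_frobenius_fieldRange {g : k[X]} {n : ℕ} (hn : ¬ p ∣ n)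
    (hg : g.coeff n ≠ 0) :
    algebraMap k[X] (RatFunc k) g ∉ (frobenius (RatFunc k) p).fieldRange := by
  rintro ⟨e, he⟩
  obtain ⟨h, rfl⟩ :=
    IsIntegrallyClosed.exists_pow_eq_of_pow_eq_algebraMap (Fact.out : p.Prime).pos he
  exact hg (coeff_pow_char_eq_zero p h hn)

theorem X_notMem_frobenius_fieldRange :
    (RatFunc.X : RatFunc k) ∉ (frobenius (RatFunc k) p).fieldRange := by
  simpa using algebraMap_notMem_frobenius_fieldRange p (g := Polynomial.X)
    (Fact.out : p.Prime).not_dvd_one (by simp)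

theorem containsZariskiOpen_compl_frobenius_fieldRange {n : ℕ} (hn : 1 ≤ n) :
    ContainsZariskiOpen {f : RatFunc k | f ∉ (frobenius (RatFunc k) p).fieldRange} n := by
  refine ⟨1, fun _ => MvPolynomial.X ⟨1, by omega⟩, ⟨fun _ => 1, 0, by simp⟩, fun c ⟨_, hc⟩ => ?_⟩
  refine algebraMap_notMem_frobenius_fieldRange p (n := 1) (Fact.out : p.Prime).not_dvd_one ?_
  rw [MvPolynomial.eval_X] at hc
  simp only [finsetSum_coeff, coeff_C_mul_X_pow]
  rwa [Finset.sum_eq_single_of_mem ⟨1, by omega⟩ (Finset.mem_univ _)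
    fun i _ hi => if_neg fun h => hi (Fin.ext h.symm), if_pos rfl]

variable [PerfectRing k p]

theorem algebraMap_mem_frobenius_fieldRange (a : k) :
    algebraMap k (RatFunc k) a ∈ (frobenius (RatFunc k) p).fieldRange := by
  obtain ⟨b, rfl⟩ := surjective_frobenius k p a
  exact ⟨algebraMap k _ b, by simp [frobenius_def]⟩

theorem closure_range_algebraMap_union_X_pow :
    Subfield.closure (Set.range (algebraMap k (RatFunc k)) ∪ {RatFunc.X ^ p}) =
      (frobenius (RatFunc k) p).fieldRange := by
  set S := Subfield.closure (Set.range (algebraMap k (RatFunc k)) ∪ {RatFunc.X ^ p})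
  refine le_antisymm (Subfield.closure_le.mpr ?_) ?_
  · rintro _ (⟨a, rfl⟩ | rfl)
    exacts [algebraMap_mem_frobenius_fieldRange p a, pow_mem_frobenius_fieldRange p _]
  · have hroots : S.comap (frobenius (RatFunc k) p) = ⊤ := by
      refine eq_top_of_algebraMap_mem_of_X_mem (fun a => ?_) (Subfield.subset_closure (.inr rfl))
      exact Subfield.subset_closure (.inl ⟨a ^ p, by simp [frobenius_def]⟩)
    rintro _ ⟨e, rfl⟩
    exact (hroots ▸ Subfield.mem_top e : e ∈ S.comap _)

theorem finrank_frobenius_fieldRange :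
    finrank (frobenius (RatFunc k) p).fieldRange (RatFunc k) = p := by
  set F := (frobenius (RatFunc k) p).fieldRange
  have hX := X_notMem_frobenius_fieldRange p (k := k)
  have htop : F⟮(RatFunc.X : RatFunc k)⟯ = ⊤ := by
    refine toSubfield_injective (eq_top_of_algebraMap_mem_of_X_mem (fun a => ?_)
      (mem_adjoin_simple_self F _))
    exact algebraMap_mem _ (⟨_, algebraMap_mem_frobenius_fieldRange p a⟩ : F)
  have hint : IsIntegral F (RatFunc.X : RatFunc k) :=
    (isIntegral_algebraMap (x := (⟨_, pow_mem_frobenius_fieldRange p RatFunc.X⟩ : F))).of_pow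
      (Fact.out : p.Prime).pos
  rw [← finrank_top', ← htop, adjoin.finrank hint,
    natDegree_minpoly_frobenius_fieldRange_of_notMem hX]

end RatFunc

/-- Let `p` be a prime and `k` an algebraically closed field of
characteristic `p`. Then `D = k(z) − k(z^p)`, the complement of the subfield generated by
`k` and `z^p`, is Diophantine over `k(z)`, has infinite complement, and contains a nonempty
Zariski open subset of `k[z]_n = k^{n+1}` for every `n ≥ 1`. In particular the analogue of
Kollár's conjecture fails in characteristic `p`. -/
theorem kollar_conjecture_fails_in_positive_characteristic
    (p : ℕ) (hp : p.Prime) (k : Type*) [Field k] [IsAlgClosed k] [CharP k p] :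
    ∃ D : Set (RatFunc k),
      D = {f : RatFunc k |
        f ∉ Subfield.closure (Set.range (algebraMap k (RatFunc k)) ∪ {RatFunc.X ^ p})} ∧
      IsDiophantine1 D ∧ Dᶜ.Infinite ∧
      ∀ n : ℕ, 1 ≤ n → ContainsZariskiOpen D n := by
  have : Fact p.Prime := ⟨hp⟩
  rw [RatFunc.closure_range_algebraMap_union_X_pow p]
  refine ⟨_, rfl, ?_, ?_, fun n hn => RatFunc.containsZariskiOpen_compl_frobenius_fieldRange p hn⟩
  · exact isDiophantine1_compl_frobenius_fieldRange (RatFunc.finrank_frobenius_fieldRange p)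
      (RatFunc.X_notMem_frobenius_fieldRange p)
  · rw [Set.compl_ofPred]
    simp only [not_not]
    exact Set.infinite_of_injective_forall_mem (algebraMap k (RatFunc k)).injective
      (RatFunc.algebraMap_mem_frobenius_fieldRange p)
end

section
/- The set ℝ − ℤ of real numbers that are not integers, regarded as a subset of the constant polynomials in ℝ[z], is Diophantine over ℝ[z]. -/
/-! Units of `ℝ[z]` are the nonzero constants, so `f s t v = 1` makes `f`, `s`, `t` constants
with `s, t ≠ 0`, and `s² + t² = 1` then puts `s²` in `(0, 1)`. The values `Q(1)` at the
solutions of the polynomial Pell equation `P² - (z² - 1) Q² = 1` are exactly the integers: the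
Chebyshev pairs `(T n, U (n - 1))` realise every `n`, and conversely a degree descent
(multiplication by `z ∓ √(z² - 1)`) brings any solution down to `Q = 0`, changing `Q(1)` by
`P(1) = ±1` at each step. Hence `f = Q + (z - 1) W + s²` says exactly that the constant `f` lies
in `ℤ + (0, 1)`. -/

namespace Polynomial

variable {R : Type*} [CommRing R]

theorem Chebyshev.T_sq_sub_mul_U_sq (n : ℤ) :
    T R n ^ 2 - (X ^ 2 - 1) * U R (n - 1) ^ 2 = 1 := by
  have step (k : ℤ) : T R (k + 1) ^ 2 - (X ^ 2 - 1) * U R k ^ 2 =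
      T R k ^ 2 - (X ^ 2 - 1) * U R (k - 1) ^ 2 := by
    have hT := T_eq_X_mul_T_sub_pol_U R (k - 1)
    have hU := U_eq_X_mul_U_add_T R (k - 1)
    simp only [sub_add_cancel, show k - 1 + 2 = k + 1 by ring] at hT hU
    rw [hT, hU]
    ring
  induction n using Int.induction_on with
  | zero => simp
  | succ k ih => rwa [add_sub_cancel_right, step]
  | pred k ih => rwa [← step, sub_add_cancel]

variable [IsDomain R] [NeZero (2 : R)] {P Q : R[X]}

theorem degree_sub_X_mul_lt_or_degree_add_X_mul_lt (h : P ^ 2 - (X ^ 2 - 1) * Q ^ 2 = 1)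
    (hQ : Q ≠ 0) : (P - X * Q).degree < Q.degree ∨ (P + X * Q).degree < Q.degree := by
  by_contra! ⟨hA, hB⟩
  have hA0 : P - X * Q ≠ 0 := fun h0 => by simp [h0, hQ] at hA
  have hB0 : P + X * Q ≠ 0 := fun h0 => by simp [h0, hQ] at hB
  rw [degree_eq_natDegree hQ, degree_eq_natDegree hA0, Nat.cast_le] at hA
  rw [degree_eq_natDegree hQ, degree_eq_natDegree hB0, Nat.cast_le] at hB
  have hprod : (P - X * Q) * (P + X * Q) = 1 - Q ^ 2 := by linear_combination h
  have hsum : (P - X * Q).natDegree + (P + X * Q).natDegree ≤ 2 * Q.natDegree := by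
    rw [← natDegree_mul hA0 hB0, hprod]
    calc (1 - Q ^ 2).natDegree ≤ max (1 : R[X]).natDegree (Q ^ 2).natDegree :=
          natDegree_sub_le _ _
      _ ≤ 2 * Q.natDegree := by simp [natDegree_pow]
  have hdiff : (P + X * Q) - (P - X * Q) = C 2 * (X * Q) := by simp only [C_ofNat]; ring
  have hdeg : (C 2 * (X * Q)).natDegree = Q.natDegree + 1 := by
    rw [natDegree_C_mul (NeZero.ne 2), natDegree_mul X_ne_zero hQ, natDegree_X, add_comm]
  have := natDegree_sub_le (P + X * Q) (P - X * Q)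
  rw [hdiff, hdeg] at this
  omega

theorem exists_intCast_eq_eval_one_of_pell (h : P ^ 2 - (X ^ 2 - 1) * Q ^ 2 = 1) :
    ∃ n : ℤ, Q.eval 1 = n := by
  induction Q using degree_lt_wf.induction generalizing P with
  | _ Q ih =>
  by_cases hQ : Q = 0
  · exact ⟨0, by simp [hQ]⟩
  obtain ⟨m, hm⟩ : ∃ m : ℤ, P.eval 1 = m := by
    have hP : P.eval 1 = 1 ∨ P.eval 1 = -1 := by simpa using congrArg (eval 1) h
    rcases hP with hP | hP
    exacts [⟨1, by simpa⟩, ⟨-1, by simpa⟩]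
  rcases degree_sub_X_mul_lt_or_degree_add_X_mul_lt h hQ with hlt | hlt
  · obtain ⟨n, hn⟩ := ih (X * Q - P) (by rwa [← neg_sub, degree_neg])
      (P := X * P - (X ^ 2 - 1) * Q) (by linear_combination h)
    simp only [eval_sub, eval_mul, eval_X, one_mul] at hn
    exact ⟨n + m, by push_cast; linear_combination hn + hm⟩
  · obtain ⟨n, hn⟩ := ih (X * Q + P) (by rwa [add_comm])
      (P := X * P + (X ^ 2 - 1) * Q) (by linear_combination h)
    simp only [eval_add, eval_mul, eval_X, one_mul] at hn
    exact ⟨n - m, by push_cast; linear_combination hn - hm⟩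

end Polynomial

open Set

theorem exists_sub_intCast_mem_Ioo_iff {α : Type*} [Ring α] [LinearOrder α] [IsStrictOrderedRing α]
    [FloorRing α] (a : α) : (∃ n : ℤ, a - n ∈ Ioo 0 1) ↔ ¬∃ n : ℤ, a = n := by
  constructor
  · rintro ⟨n, h0, h1⟩ ⟨m, rfl⟩
    have : n < m := by exact_mod_cast sub_pos.mp h0
    have : m < n + 1 := by exact_mod_cast sub_lt_iff_lt_add'.mp h1
    omega
  · intro ha
    exact ⟨⌊a⌋, Int.fract_pos.mpr fun h => ha ⟨⌊a⌋, h⟩, Int.fract_lt_one a⟩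

theorem mem_Ioo_zero_one_iff_exists_sq (c : ℝ) :
    c ∈ Ioo 0 1 ↔ ∃ σ τ : ℝ, σ ≠ 0 ∧ τ ≠ 0 ∧ c = σ ^ 2 ∧ σ ^ 2 + τ ^ 2 = 1 := by
  constructor
  · rintro ⟨h0, h1⟩
    refine ⟨√c, √(1 - c), (Real.sqrt_pos.mpr h0).ne', (Real.sqrt_pos.mpr (sub_pos.mpr h1)).ne',
      (Real.sq_sqrt h0.le).symm, ?_⟩
    rw [Real.sq_sqrt h0.le, Real.sq_sqrt (by linarith)]
    ring
  · rintro ⟨σ, τ, hσ, hτ, rfl, h⟩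
    exact ⟨by positivity, by linarith [show 0 < τ ^ 2 by positivity]⟩

open Polynomial in
theorem exists_C_eq_not_intCast_iff (f : ℝ[X]) :
    (∃ a : ℝ, f = C a ∧ ¬∃ n : ℤ, a = n) ↔
      ∃ P Q W s t v : ℝ[X], P ^ 2 - (X ^ 2 - 1) * Q ^ 2 = 1 ∧ f = Q + (X - 1) * W + s ^ 2 ∧
        s ^ 2 + t ^ 2 = 1 ∧ f * s * t * v = 1 := by
  constructor
  · rintro ⟨a, rfl, ha⟩
    obtain ⟨n, hn⟩ := (exists_sub_intCast_mem_Ioo_iff a).2 ha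
    obtain ⟨σ, τ, hσ, hτ, hc, hst⟩ := (mem_Ioo_zero_one_iff_exists_sq _).1 hn
    have ha0 : a ≠ 0 := fun h => ha ⟨0, by simp [h]⟩
    obtain ⟨W, hW⟩ := X_sub_C_dvd_sub_C_eval (p := Chebyshev.U ℝ (n - 1)) (a := 1)
    refine ⟨Chebyshev.T ℝ n, Chebyshev.U ℝ (n - 1), -W, C σ, C τ, C (a * σ * τ)⁻¹,
      Chebyshev.T_sq_sub_mul_U_sq n, ?_, ?_, ?_⟩
    · simp only [Chebyshev.U_eval_one, Int.cast_sub, Int.cast_one, sub_add_cancel, C_1] at hW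
      rw [← C_pow, ← hc, C_sub]
      linear_combination -hW
    · rw [← C_pow, ← C_pow, ← C_add, hst, C_1]
    · rw [← C_mul, ← C_mul, ← C_mul, mul_inv_cancel₀ (by positivity), C_1]
  · rintro ⟨P, Q, W, s, t, v, hpell, hf, hst, hunit⟩
    obtain ⟨⟨hf_unit, hs_unit⟩, ht_unit⟩ : (IsUnit f ∧ IsUnit s) ∧ IsUnit t := by
      simpa only [IsUnit.mul_iff] using IsUnit.of_mul_eq_one _ hunit
    obtain ⟨a, -, rfl⟩ := isUnit_iff.mp hf_unit
    obtain ⟨σ, hσ, rfl⟩ := isUnit_iff.mp hs_unit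
    obtain ⟨τ, hτ, rfl⟩ := isUnit_iff.mp ht_unit
    obtain ⟨n, hn⟩ := exists_intCast_eq_eval_one_of_pell hpell
    refine ⟨a, rfl, (exists_sub_intCast_mem_Ioo_iff a).1 ⟨n, (mem_Ioo_zero_one_iff_exists_sq _).2
      ⟨σ, τ, hσ.ne_zero, hτ.ne_zero, ?_, ?_⟩⟩⟩
    · have := congrArg (eval 1) hf
      simp only [eval_C, eval_add, eval_mul, eval_sub, eval_X, eval_one, sub_self, zero_mul,
        add_zero, eval_pow, hn] at this
      linear_combination this
    · simpa using congrArg (eval 1) hst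

open MvPolynomial in
/-- The set `ℝ − ℤ`, regarded as a set of constant polynomials in `ℝ[z]`,
is Diophantine over `ℝ[z]`. -/
theorem real_sub_int_diophantine :
    IsDiophantine1
      {f : Polynomial ℝ | ∃ a : ℝ, f = Polynomial.C a ∧ ¬ ∃ n : ℤ, a = (n : ℝ)} := by
  let x : MvPolynomial (Fin 1 ⊕ Fin 6) (Polynomial ℝ) := X (.inl 0)
  let y (i : Fin 6) : MvPolynomial (Fin 1 ⊕ Fin 6) (Polynomial ℝ) := X (.inr i)
  refine ⟨6, 4, ![y 0 ^ 2 - C (Polynomial.X ^ 2 - 1) * y 1 ^ 2 - 1,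
    x - (y 1 + C (Polynomial.X - 1) * y 2 + y 3 ^ 2), y 3 ^ 2 + y 4 ^ 2 - 1,
    x * y 3 * y 4 * y 5 - 1], fun f => (exists_C_eq_not_intCast_iff f).trans ?_⟩
  simp [x, y, Fin.exists_fin_succ_pi, Fin.forall_fin_succ, sub_eq_zero]
end

section
/- The set {(f,g) ∈ ℝ[z]² : deg(f) = deg(g)} is Diophantine over ℝ[z], where deg denotes the usual degree of a polynomial with the convention that nonzero constants have degree 0 and the degree of 0 is 0. -/
/-!
`deg f ≤ deg g` iff `f² ≤ c (g² + 1)` on `ℝ` for some constant `c`: the quotient `f² / (g² + 1)`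
is continuous and bounded at infinity exactly in that case. A nonnegative real polynomial is a sum
of two squares (split off a factor `(X - u)² + v²` at a complex root and use the two-squares
identity). So `deg f = deg g` iff, for some unit `s` of `ℝ[X]`, both `s² (g² + 1) - f²` and
`s² (f² + 1) - g²` are sums of two squares, and `s` being a unit is the equation `s t = 1`.
-/

open Filter Polynomial

namespace Polynomial

theorem sq_X_sub_C_dvd_of_forall_eval_nonneg {p : ℝ[X]} (hp : ∀ x, 0 ≤ p.eval x) {u : ℝ}
    (hu : p.IsRoot u) : (X - C u) ^ 2 ∣ p := by
  obtain ⟨s, rfl⟩ := dvd_iff_isRoot.2 hu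
  -- `u` is a minimum of `p`, so `p' = s + (X - C u) * s'` vanishes there too.
  have hmin : IsLocalMin (fun x => ((X - C u) * s).eval x) u :=
    Eventually.of_forall fun x => by simpa [hu.eq_zero] using hp x
  have hs : s.IsRoot u := by
    have hder := hmin.deriv_eq_zero
    rw [Polynomial.deriv, derivative_mul] at hder
    simpa using hder
  obtain ⟨t, rfl⟩ := dvd_iff_isRoot.2 hs
  exact ⟨t, by ring⟩

theorem eval_nonneg_of_forall_ne {p : ℝ[X]} {u : ℝ} (h : ∀ x ≠ u, 0 ≤ p.eval x)
    (x : ℝ) : 0 ≤ p.eval x := by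
  rcases eq_or_ne x u with rfl | hx
  · exact ge_of_tendsto (p.continuous.tendsto x |>.mono_left nhdsWithin_le_nhds)
      (eventually_nhdsWithin_of_forall (s := {x}ᶜ) h)
  · exact h x hx

theorem exists_sq_add_sq_dvd_of_forall_eval_nonneg {p : ℝ[X]} (hp : ∀ x, 0 ≤ p.eval x)
    (hdeg : p.degree ≠ 0) : ∃ u v : ℝ, (X - C u) ^ 2 + C v ^ 2 ∣ p := by
  obtain ⟨z, hz⟩ := IsAlgClosed.exists_aeval_eq_zero ℂ p hdeg
  rcases eq_or_ne z.im 0 with him | him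
  · lift z to ℝ using him with r
    refine ⟨r, 0, ?_⟩
    have hr : p.IsRoot r := Complex.ofReal_eq_zero.1 ((aeval_ofReal (K := ℂ) p r).symm.trans hz)
    simpa using sq_X_sub_C_dvd_of_forall_eval_nonneg hp hr
  · refine ⟨z.re, z.im, ?_⟩
    convert p.quadratic_dvd_of_aeval_eq_zero_im_ne_zero hz him using 1
    simp only [Complex.sq_norm, Complex.normSq_apply, map_add, map_mul, map_ofNat]
    ring

theorem exists_eq_sq_add_sq_of_forall_eval_nonneg {p : ℝ[X]} (hp : ∀ x, 0 ≤ p.eval x) :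
    ∃ a b : ℝ[X], p = a ^ 2 + b ^ 2 := by
  induction h : p.natDegree using Nat.strong_induction_on generalizing p with
  | _ n ih =>
  rcases eq_or_ne p.natDegree 0 with h0 | h0
  · obtain ⟨c, rfl⟩ := natDegree_eq_zero.mp h0
    refine ⟨C √c, 0, ?_⟩
    rw [← C_pow, Real.sq_sqrt (by simpa using hp 0)]
    ring
  obtain ⟨u, v, t, rfl⟩ := exists_sq_add_sq_dvd_of_forall_eval_nonneg hp
    fun hd => h0 (natDegree_eq_of_degree_eq_some hd)
  have hΔ : ∀ x ≠ u, 0 < ((X - C u) ^ 2 + C v ^ 2).eval x := fun x hx => by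
    have : 0 < (x - u) ^ 2 := by positivity [sub_ne_zero.2 hx]
    simp only [eval_add, eval_pow, eval_sub, eval_X, eval_C]
    positivity
  have ht : ∀ x, 0 ≤ t.eval x :=
    eval_nonneg_of_forall_ne fun x hx =>
      nonneg_of_mul_nonneg_right (by simpa using hp x) (hΔ x hx)
  have ht0 : t ≠ 0 := by rintro rfl; simp at h0
  have hΔdeg : ((X - C u) ^ 2 + C v ^ 2 : ℝ[X]).natDegree = 2 := by
    rw [← C_pow, natDegree_add_C, natDegree_pow, natDegree_X_sub_C]
  have hlt : t.natDegree < n := by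
    rw [← h, natDegree_mul (by rintro h'; simp [h'] at hΔdeg) ht0, hΔdeg]
    omega
  obtain ⟨a, b, rfl⟩ := ih _ hlt ht rfl
  exact ⟨(X - C u) * a - C v * b, (X - C u) * b + C v * a, by ring⟩

theorem exists_forall_abs_eval_le_mul_of_degree_le {p q : ℝ[X]} (hpq : p.degree ≤ q.degree)
    (hq : ∀ x, 0 < q.eval x) : ∃ c, ∀ x, |p.eval x| ≤ c * q.eval x := by
  have hratio : (fun x => p.eval x / q.eval x) =O[cocompact ℝ] (1 : ℝ → ℝ) := by
    have h := (isBigO_cobounded_of_degree_le hpq).mul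
      (Asymptotics.isBigO_refl (fun x => (q.eval x)⁻¹) _)
    rw [Metric.cobounded_eq_cocompact] at h
    exact h.congr (fun x => rfl) fun x => mul_inv_cancel₀ (hq x).ne'
  have hcont : Continuous fun x => p.eval x / q.eval x :=
    p.continuous.div q.continuous fun x => (hq x).ne'
  obtain ⟨c, hc⟩ := isBounded_iff_forall_norm_le.1 (hcont.isBounded_range_iff_isBigO.2 hratio)
  refine ⟨c, fun x => ?_⟩
  have hx := hc _ ⟨x, rfl⟩
  rwa [Real.norm_eq_abs, abs_div, abs_of_pos (hq x), div_le_iff₀ (hq x)] at hx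

theorem natDegree_le_iff_exists_forall_abs_eval_le_mul {p q : ℝ[X]} (hq : ∀ x, 0 < q.eval x) :
    p.natDegree ≤ q.natDegree ↔ ∃ c, ∀ x, |p.eval x| ≤ c * q.eval x := by
  have hq0 : q ≠ 0 := by rintro rfl; simpa using hq 0
  rw [← not_lt, natDegree_lt_natDegree_iff hq0, not_lt]
  refine ⟨fun h => exists_forall_abs_eval_le_mul_of_degree_le h hq, fun ⟨c, hc⟩ => ?_⟩
  by_contra! hlt
  obtain ⟨x, hx⟩ :=
    ((abs_div_tendsto_atTop_atTop_of_degree_gt p q hlt hq0).eventually_gt_atTop c).exists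
  rw [abs_div, abs_of_pos (hq x), lt_div_iff₀ (hq x)] at hx
  exact (hc x).not_gt hx

theorem natDegree_le_iff_exists_forall_sq_eval_le {f g : ℝ[X]} :
    f.natDegree ≤ g.natDegree ↔ ∃ c, ∀ x, f.eval x ^ 2 ≤ c * (g.eval x ^ 2 + 1) := by
  have hdeg : f.natDegree ≤ g.natDegree ↔ (f ^ 2).natDegree ≤ (g ^ 2 + 1).natDegree := by
    rw [← C_1, natDegree_add_C, natDegree_pow, natDegree_pow]
    omega
  rw [hdeg, natDegree_le_iff_exists_forall_abs_eval_le_mul fun x => by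
    simp only [eval_add, eval_pow, eval_one]; positivity]
  simp only [eval_pow, eval_add, eval_one, abs_sq]

theorem eventually_exists_C_mul_eq_sq_add_sq_add_sq {f g : ℝ[X]}
    (h : f.natDegree ≤ g.natDegree) :
    ∀ᶠ c in atTop, ∃ a b : ℝ[X], C c * (g ^ 2 + 1) = f ^ 2 + a ^ 2 + b ^ 2 := by
  obtain ⟨c₀, hc₀⟩ := natDegree_le_iff_exists_forall_sq_eval_le.1 h
  filter_upwards [eventually_ge_atTop c₀] with c hc
  have hnonneg : ∀ x, 0 ≤ (C c * (g ^ 2 + 1) - f ^ 2).eval x := fun x => by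
    simp only [eval_sub, eval_mul, eval_C, eval_add, eval_pow, eval_one]
    nlinarith [hc₀ x, sq_nonneg (g.eval x)]
  obtain ⟨a, b, hab⟩ := exists_eq_sq_add_sq_of_forall_eval_nonneg hnonneg
  exact ⟨a, b, by linear_combination hab⟩

theorem natDegree_le_of_C_mul_eq_sq_add_sq_add_sq {f g a b : ℝ[X]} {c : ℝ}
    (h : C c * (g ^ 2 + 1) = f ^ 2 + a ^ 2 + b ^ 2) : f.natDegree ≤ g.natDegree := by
  refine natDegree_le_iff_exists_forall_sq_eval_le.2 ⟨c, fun x => ?_⟩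
  have hx := congrArg (eval x) h
  simp only [eval_mul, eval_C, eval_add, eval_pow, eval_one] at hx
  nlinarith [sq_nonneg (a.eval x), sq_nonneg (b.eval x)]

theorem natDegree_eq_natDegree_iff_exists_isUnit {f g : ℝ[X]} :
    f.natDegree = g.natDegree ↔ ∃ s : ℝ[X], IsUnit s ∧
      (∃ a b : ℝ[X], s ^ 2 * (g ^ 2 + 1) = f ^ 2 + a ^ 2 + b ^ 2) ∧
      ∃ a b : ℝ[X], s ^ 2 * (f ^ 2 + 1) = g ^ 2 + a ^ 2 + b ^ 2 := by
  constructor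
  · intro h
    obtain ⟨c, h₁, h₂, hc⟩ :=
      ((eventually_exists_C_mul_eq_sq_add_sq_add_sq h.le).and
        ((eventually_exists_C_mul_eq_sq_add_sq_add_sq h.ge).and (eventually_gt_atTop 0))).exists
    have hs : (C √c : ℝ[X]) ^ 2 = C c := by rw [← C_pow, Real.sq_sqrt hc.le]
    exact ⟨C √c, isUnit_C.2 (Real.sqrt_pos.2 hc).ne'.isUnit, hs ▸ h₁, hs ▸ h₂⟩
  · rintro ⟨s, hs, ⟨a₁, b₁, h₁⟩, a₂, b₂, h₂⟩
    obtain ⟨k, -, rfl⟩ := Polynomial.isUnit_iff.1 hs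
    rw [← C_pow] at h₁ h₂
    exact (natDegree_le_of_C_mul_eq_sq_add_sq_add_sq h₁).antisymm
      (natDegree_le_of_C_mul_eq_sq_add_sq_add_sq h₂)

end Polynomial

/-- The set `{(f,g) ∈ ℝ[z]² : deg f = deg g}` is Diophantine over
`ℝ[z]`, where `deg` is the usual degree with nonzero constants of degree `0` and
`deg 0 = 0`. -/
theorem real_poly_equal_degree_diophantine :
    IsDiophantine2 {p : Polynomial ℝ × Polynomial ℝ | p.1.natDegree = p.2.natDegree} := by
  let x : Fin 2 → MvPolynomial (Fin 2 ⊕ Fin 6) ℝ[X] := fun i => MvPolynomial.X (.inl i)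
  let y : Fin 6 → MvPolynomial (Fin 2 ⊕ Fin 6) ℝ[X] := fun j => MvPolynomial.X (.inr j)
  refine ⟨6, 3, ![y 0 * y 1 - 1,
    y 0 ^ 2 * (x 1 ^ 2 + 1) - (x 0 ^ 2 + y 2 ^ 2 + y 3 ^ 2),
    y 0 ^ 2 * (x 0 ^ 2 + 1) - (x 1 ^ 2 + y 4 ^ 2 + y 5 ^ 2)], fun ⟨f, g⟩ => ?_⟩
  simp only [x, y, Fin.forall_fin_succ, Fin.exists_fin_succ_pi, Fin.exists_fin_zero_pi,
    forall_const, Matrix.cons_val_succ, Matrix.cons_val_fin_one, Matrix.cons_val,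
    Matrix.finZeroElim_eq_zero, Matrix.zero_empty, Matrix.Fin.cons_vecEmpty,
    Matrix.Fin.cons_vecCons, map_sub, map_mul, map_add, map_pow, map_one, MvPolynomial.eval_X,
    Sum.elim_inl, Sum.elim_inr, sub_eq_zero, exists_and_left, exists_and_right,
    ← isUnit_iff_exists_inv]
  exact natDegree_eq_natDegree_iff_exists_isUnit
end
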